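/- arXiv:2006.03567 — 7 statements merged into one kernel-verified Lean document; each statement's English description precedes it below -/
import Mathlib

section
/- For a path graph P_n with n ≥ 2 vertices and n odd, the line completion number of P_n equals (n-1)/2; that is, the least r such that the super line graph L_r(P_n) is complete is (n-1)/2. -/
open SimpleGraph

def shareVertex {V : Type*} (e f : Sym2 V) : Prop := ∃ v, v ∈ e ∧ v ∈ f

def SuperLineComplete {V : Type*} (G : SimpleGraph V) (r : ℕ) : Prop :=
  ∀ A B : Finset (Sym2 V), ↑A ⊆ G.edgeSet → ↑B ⊆ G.edgeSet →
    A.card = r → B.card = r → A ≠ B →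
    ∃ e ∈ A, ∃ f ∈ B, e ≠ f ∧ shareVertex e f

def lcIs {V : Type*} (G : SimpleGraph V) (k : ℕ) : Prop :=
  IsLeast {r : ℕ | 0 < r ∧ SuperLineComplete G r} k

def gridGraph (n m : ℕ) : SimpleGraph (Fin n × Fin m) :=
  (pathGraph n).boxProd (pathGraph m)

/-!
Number the edges of `P_{m+1}` as `0, …, m - 1`; two edges meet iff their indices differ by at
most one. If `A ≠ B` are edge sets of size `r` with `2r ≥ m` and no edge of `A` meets an edge
of `B` other than itself, let `a` and `b` be the largest elements of `A \ B` and `B \ A`. Then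
the `#(A ∩ B) + 2` points `a + 1`, `b + 1` and `c + 1` for `c ∈ A ∩ B` all avoid `A ∪ B`, while
only `m + 1 - #(A ∪ B) ≤ #(A ∩ B) + 1` of the points `0, …, m` do. Conversely, if `2r < m`,
the first `r` and the last `r` edges are pairwise disjoint. Hence `lc(P_{m+1}) = ⌈m/2⌉`.
-/

open Finset

namespace Fin

variable {m : ℕ}

lemma exists_mem_sdiff_forall_succ_ne {X Y : Finset (Fin m)} (hXY : (X \ Y).Nonempty)
    (h : ∀ x ∈ X, ∀ y ∈ Y, (x : ℕ) + 1 ≠ y) :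
    ∃ a ∈ X \ Y, ∀ z ∈ X ∪ Y, (a : ℕ) + 1 ≠ z := by
  refine ⟨(X \ Y).max' hXY, (X \ Y).max'_mem hXY, fun z hz hsucc => ?_⟩
  by_cases hzY : z ∈ Y
  · exact h _ (mem_sdiff.1 ((X \ Y).max'_mem hXY)).1 z hzY hsucc
  · have hzX : z ∈ X := by simpa [hzY] using hz
    have := (X \ Y).le_max' z (mem_sdiff.2 ⟨hzX, hzY⟩)
    rw [Fin.le_def] at this
    omega

lemma exists_succ_eq_of_le_card_add_card {A B : Finset (Fin m)} (hAB : ¬A ⊆ B) (hBA : ¬B ⊆ A)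
    (hcard : m ≤ #A + #B) : ∃ a ∈ A, ∃ b ∈ B, (a : ℕ) + 1 = b ∨ (b : ℕ) + 1 = a := by
  by_contra! h
  obtain ⟨a, haAB, ha⟩ := exists_mem_sdiff_forall_succ_ne (sdiff_nonempty.2 hAB)
    fun x hx y hy => (h x hx y hy).1
  obtain ⟨b, hbBA, hb⟩ := exists_mem_sdiff_forall_succ_ne (sdiff_nonempty.2 hBA)
    fun x hx y hy => (h y hy x hx).2
  rw [union_comm] at hb
  obtain ⟨haA, haB⟩ := mem_sdiff.1 haAB
  obtain ⟨hbB, hbA⟩ := mem_sdiff.1 hbBA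
  set E := insert a (insert b (A ∩ B))
  have hE : #E = #(A ∩ B) + 2 := by
    rw [card_insert_of_notMem (by simp [haB, ne_of_mem_of_not_mem haA hbA]),
      card_insert_of_notMem (by simp [hbA])]
  have hEsucc : ∀ x ∈ E, ∀ z ∈ A ∪ B, (x : ℕ) + 1 ≠ z := by
    simp only [E, mem_insert, mem_inter]
    rintro x (rfl | rfl | ⟨hxA, hxB⟩) z hz
    · exact ha z hz
    · exact hb z hz
    · rcases mem_union.1 hz with hzA | hzB
      · exact (h z hzA x hxB).2
      · exact (h x hxA z hzB).1
  have hdisj : Disjoint ((A ∪ B).map castSuccEmb) (E.map (succEmb m)) := by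
    simp only [Finset.disjoint_left, mem_map, coe_castSuccEmb, coe_succEmb, not_exists, not_and]
    rintro _ ⟨z, hz, rfl⟩ x hx hxz
    exact hEsucc x hx z hz (by simpa [Fin.ext_iff] using hxz)
  have := (card_union_of_disjoint hdisj).symm.trans_le (card_le_univ _)
  rw [card_map, card_map, Fintype.card_fin] at this
  have := card_union_add_card_inter A B
  omega

end Fin

namespace SimpleGraph

def pathEdge {m : ℕ} (i : Fin m) : Sym2 (Fin (m + 1)) := s(i.castSucc, i.succ)

variable {m : ℕ}

lemma pathEdge_injective : Function.Injective (pathEdge (m := m)) := by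
  intro i j h
  rcases Sym2.eq_iff.1 h with ⟨h1, -⟩ | ⟨h1, h2⟩
  · exact Fin.castSucc_injective m h1
  · simp only [Fin.ext_iff, Fin.val_castSucc, Fin.val_succ] at h1 h2
    omega

lemma range_pathEdge : Set.range (pathEdge (m := m)) = (pathGraph (m + 1)).edgeSet := by
  ext e
  induction e using Sym2.ind with
  | _ u v =>
    rw [mem_edgeSet, pathGraph_adj]
    constructor
    · rintro ⟨i, hi⟩
      rcases Sym2.eq_iff.1 hi with ⟨rfl, rfl⟩ | ⟨rfl, rfl⟩ <;> simp
    · rintro (h | h)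
      · exact ⟨⟨u, by omega⟩, Sym2.eq_iff.2 (Or.inl ⟨Fin.ext rfl, Fin.ext h⟩)⟩
      · exact ⟨⟨v, by omega⟩, Sym2.eq_iff.2 (Or.inr ⟨Fin.ext rfl, Fin.ext h⟩)⟩

lemma shareVertex_pathEdge_iff {i j : Fin m} :
    shareVertex (pathEdge i) (pathEdge j) ↔ (i : ℕ) ≤ j + 1 ∧ (j : ℕ) ≤ i + 1 := by
  simp only [shareVertex, pathEdge, Sym2.mem_iff, Fin.ext_iff, Fin.val_castSucc, Fin.val_succ]
  constructor
  · rintro ⟨v, hi, hj⟩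
    omega
  · intro h
    by_cases hij : (i : ℕ) ≤ j
    · exact ⟨j.castSucc, by simp; omega, by simp⟩
    · exact ⟨i.castSucc, by simp, by simp; omega⟩

lemma coe_image_pathEdge_subset (I : Finset (Fin m)) :
    ↑(I.image pathEdge) ⊆ (pathGraph (m + 1)).edgeSet := by
  rw [coe_image, ← range_pathEdge]
  exact Set.image_subset_range _ _

lemma exists_image_pathEdge_eq {A : Finset (Sym2 (Fin (m + 1)))}
    (hA : ↑A ⊆ (pathGraph (m + 1)).edgeSet) : ∃ I : Finset (Fin m), I.image pathEdge = A := by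
  rw [← range_pathEdge, ← Set.image_univ] at hA
  obtain ⟨I, -, hI⟩ := subset_set_image_iff.1 hA
  exact ⟨I, hI⟩

theorem superLineComplete_pathGraph {r : ℕ} (h : m ≤ 2 * r) :
    SuperLineComplete (pathGraph (m + 1)) r := by
  intro A B hA hB hAr hBr hAB
  obtain ⟨I, rfl⟩ := exists_image_pathEdge_eq hA
  obtain ⟨J, rfl⟩ := exists_image_pathEdge_eq hB
  rw [card_image_of_injective _ pathEdge_injective] at hAr hBr
  have hIJ : ¬I ⊆ J := fun hsub => hAB (congrArg _ (eq_of_subset_of_card_le hsub (by omega)))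
  have hJI : ¬J ⊆ I := fun hsub => hAB (congrArg _ (eq_of_subset_of_card_le hsub (by omega)).symm)
  obtain ⟨i, hi, j, hj, hij⟩ := Fin.exists_succ_eq_of_le_card_add_card hIJ hJI (by omega)
  refine ⟨pathEdge i, mem_image_of_mem _ hi, pathEdge j, mem_image_of_mem _ hj,
    pathEdge_injective.ne (Fin.val_ne_iff.1 (by omega)), shareVertex_pathEdge_iff.2 (by omega)⟩

theorem not_superLineComplete_pathGraph {r : ℕ} (hr : 0 < r) (h : 2 * r < m) :
    ¬SuperLineComplete (pathGraph (m + 1)) r := by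
  intro H
  let I := Iio (⟨r, by omega⟩ : Fin m)
  let J := Ici (⟨m - r, by omega⟩ : Fin m)
  have h0I : (⟨0, by omega⟩ : Fin m) ∈ I := by simp [I, Fin.lt_def]; omega
  have h0J : (⟨0, by omega⟩ : Fin m) ∉ J := by simp [J, Fin.le_def]; omega
  have hIJ : I.image pathEdge ≠ J.image pathEdge :=
    fun hIJ => h0J (image_injective pathEdge_injective hIJ ▸ h0I)
  obtain ⟨e, he, f, hf, -, hef⟩ := H _ _ (coe_image_pathEdge_subset I) (coe_image_pathEdge_subset J)
    (by simp [card_image_of_injective _ pathEdge_injective, I])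
    (by simp [card_image_of_injective _ pathEdge_injective, J]; omega) hIJ
  obtain ⟨i, hi, rfl⟩ := mem_image.1 he
  obtain ⟨j, hj, rfl⟩ := mem_image.1 hf
  simp only [I, J, mem_Iio, mem_Ici, Fin.lt_def, Fin.le_def] at hi hj
  rw [shareVertex_pathEdge_iff] at hef
  omega

theorem lcIs_pathGraph (hm : 0 < m) : lcIs (pathGraph (m + 1)) ((m + 1) / 2) := by
  refine ⟨⟨by omega, superLineComplete_pathGraph (by omega)⟩, fun r ⟨hr, hcomplete⟩ => ?_⟩
  by_contra! hlt
  exact not_superLineComplete_pathGraph hr (by omega) hcomplete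

end SimpleGraph

theorem lc_path_odd (n : ℕ) (hn : 2 ≤ n) (ho : Odd n) :
    lcIs (SimpleGraph.pathGraph n) ((n - 1) / 2) := by
  obtain ⟨k, rfl⟩ := ho
  rw [show (2 * k + 1 - 1) / 2 = (2 * k + 1) / 2 by omega]
  exact SimpleGraph.lcIs_pathGraph (by omega)
end

section
/- In the path graph P_n with n odd, n ≥ 3, any two (not necessarily distinct) subsets of edges each of size (n-1)/2 contain a pair of edges sharing a vertex; consequently the super line graph L_{(n-1)/2}(P_n) is complete. -/
open SimpleGraph

open Finset

/-! ### Combinatorial core on `Finset ℕ` -/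

/-- number of elements of the pair `{2k, 2k+1}` in `A` plus in `B` -/
private def pcnt (A B : Finset ℕ) (k : ℕ) : ℕ :=
  (if 2*k ∈ A then 1 else 0) + (if 2*k+1 ∈ A then 1 else 0) +
  ((if 2*k ∈ B then 1 else 0) + (if 2*k+1 ∈ B then 1 else 0))

private lemma pcnt_comm (A B : Finset ℕ) (k : ℕ) : pcnt A B k = pcnt B A k := by
  unfold pcnt; omega

private lemma sum_split (f : ℕ → ℕ) (M : ℕ) :
    ∑ i ∈ Finset.range (2*M), f i = ∑ k ∈ Finset.range M, (f (2*k) + f (2*k+1)) := by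
  induction M with
  | zero => simp
  | succ M ih =>
    rw [show 2*(M+1) = (2*M+1)+1 by ring, Finset.sum_range_succ, Finset.sum_range_succ,
      Finset.sum_range_succ, ih]
    ring

private lemma card_eq_sum_ind (A : Finset ℕ) (N : ℕ) (hA : ∀ i ∈ A, i < N) :
    ∑ i ∈ Finset.range N, (if i ∈ A then 1 else 0) = A.card := by
  classical
  have h : (Finset.range N).filter (fun i => i ∈ A) = A := by
    ext i
    simp only [Finset.mem_filter, Finset.mem_range]
    exact ⟨fun h => h.2, fun h => ⟨hA i h, h⟩⟩
  rw [Finset.sum_boole, h]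
  simp

private lemma pcnt_eq_two (m : ℕ) (A B : Finset ℕ)
    (hA2 : ∀ i ∈ A, i < 2*m) (hB2 : ∀ i ∈ B, i < 2*m)
    (hAc : A.card = m) (hBc : B.card = m)
    (P1 : ∀ i, i ∈ A → i+1 ∈ B → False)
    (P2 : ∀ i, i ∈ B → i+1 ∈ A → False) :
    ∀ k ∈ Finset.range m, pcnt A B k = 2 := by
  classical
  have hle : ∀ k ∈ Finset.range m, pcnt A B k ≤ 2 := by
    intro k _
    unfold pcnt
    by_cases h1 : 2*k ∈ A <;> by_cases h2 : 2*k+1 ∈ A <;>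
      by_cases h3 : 2*k ∈ B <;> by_cases h4 : 2*k+1 ∈ B <;>
      first
        | (exact absurd (P1 (2*k) h1 h4) not_false)
        | (exact absurd (P2 (2*k) h3 h2) not_false)
        | simp [h1, h2, h3, h4]
  have hsum : ∑ k ∈ Finset.range m, pcnt A B k = ∑ k ∈ Finset.range m, 2 := by
    have e1 := card_eq_sum_ind A (2*m) hA2
    have e2 := card_eq_sum_ind B (2*m) hB2
    have s1 := sum_split (fun i => if i ∈ A then 1 else 0) m
    have s2 := sum_split (fun i => if i ∈ B then 1 else 0) m
    have : ∑ k ∈ Finset.range m, pcnt A B k =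
        (∑ k ∈ Finset.range m, ((if 2*k ∈ A then 1 else 0) + (if 2*k+1 ∈ A then 1 else 0))) +
        (∑ k ∈ Finset.range m, ((if 2*k ∈ B then 1 else 0) + (if 2*k+1 ∈ B then 1 else 0))) := by
      unfold pcnt
      rw [← Finset.sum_add_distrib]
    rw [this, ← s1, ← s2, e1, e2, hAc, hBc, Finset.sum_const, Finset.card_range, smul_eq_mul]
    omega
  exact fun k hk => ((Finset.sum_eq_sum_iff_of_le hle).1 hsum k hk)

/-- propagation: if `2k+1 ∈ A` then `2(k+1)+1 ∈ A`. -/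
private lemma step_lemma (m : ℕ) (A B : Finset ℕ)
    (P1 : ∀ i, i ∈ A → i+1 ∈ B → False)
    (hck : ∀ k ∈ Finset.range m, pcnt A B k = 2) :
    ∀ l, l < m → ∀ k, k ≤ l → 2*k+1 ∈ A → 2*l+1 ∈ A := by
  intro l
  induction l with
  | zero =>
    intro _ k hk h
    obtain rfl : k = 0 := Nat.le_zero.1 hk
    exact h
  | succ l ih =>
    intro hlm k hk h
    rcases Nat.lt_succ_iff_lt_or_eq.1 (Nat.lt_succ_of_le hk) with hkl | rfl
    · -- k ≤ l, get 2l+1 ∈ A then step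
      have hQ : 2*l+1 ∈ A := ih (by omega) k (by omega) h
      have hc := hck (l+1) (Finset.mem_range.2 hlm)
      unfold pcnt at hc
      have hB2' : 2*(l+1) ∉ B := by
        intro hb
        exact P1 (2*l+1) hQ (by rw [show 2*l+1+1 = 2*(l+1) by ring]; exact hb)
      by_contra hA3
      rw [if_neg hA3, if_neg hB2'] at hc
      by_cases ha : 2*(l+1) ∈ A
      · by_cases hb : 2*(l+1)+1 ∈ B
        · exact P1 _ ha hb
        · rw [if_pos ha, if_neg hb] at hc; omega
      · rw [if_neg ha] at hc
        by_cases hb : 2*(l+1)+1 ∈ B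
        · rw [if_pos hb] at hc; omega
        · rw [if_neg hb] at hc; omega
    · exact h

/-- a full pair for `A` exists, given an element of `A \ B`. -/
private lemma full_pair (m : ℕ) (A B : Finset ℕ)
    (P1 : ∀ i, i ∈ A → i+1 ∈ B → False)
    (P2 : ∀ i, i ∈ B → i+1 ∈ A → False)
    (hck : ∀ k ∈ Finset.range m, pcnt A B k = 2)
    (x : ℕ) (hxA : x ∈ A) (hxB : x ∉ B) (hxlt : x < 2*m) :
    ∃ k, k < m ∧ 2*k ∈ A ∧ 2*k+1 ∈ A ∧ 2*k ∉ B ∧ 2*k+1 ∉ B := by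
  classical
  rcases Nat.even_or_odd x with he | he
  · obtain ⟨k, hk⟩ := he
    have hx : x = 2*k := by omega
    subst hx
    have hkm' : k < m := by omega
    have h1 : 2*k ∈ A := hxA
    have h3 : 2*k ∉ B := hxB
    have h4 : 2*k+1 ∉ B := fun hb => P1 (2*k) h1 hb
    have hc := hck k (Finset.mem_range.2 hkm')
    unfold pcnt at hc
    refine ⟨k, hkm', h1, ?_, h3, h4⟩
    by_contra h2
    rw [if_pos h1, if_neg h2, if_neg h3, if_neg h4] at hc
    omega
  · obtain ⟨k, hk⟩ := he
    have hx : x = 2*k+1 := by omega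
    subst hx
    have hkm' : k < m := by omega
    have h2 : 2*k+1 ∈ A := hxA
    have h4 : 2*k+1 ∉ B := hxB
    have h3 : 2*k ∉ B := fun hb => P2 (2*k) hb h2
    have hc := hck k (Finset.mem_range.2 hkm')
    unfold pcnt at hc
    refine ⟨k, hkm', ?_, h2, h3, h4⟩
    by_contra h1
    rw [if_neg h1, if_pos h2, if_neg h3, if_neg h4] at hc
    omega
  
private lemma core (m : ℕ) (A B : Finset ℕ)
    (hA2 : ∀ i ∈ A, i < 2*m) (hB2 : ∀ i ∈ B, i < 2*m)
    (hAc : A.card = m) (hBc : B.card = m)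
    (P1 : ∀ i, i ∈ A → i+1 ∈ B → False)
    (P2 : ∀ i, i ∈ B → i+1 ∈ A → False)
    (x : ℕ) (hxA : x ∈ A) (hxB : x ∉ B)
    (y : ℕ) (hyB : y ∈ B) (hyA : y ∉ A) : False := by
  have hck := pcnt_eq_two m A B hA2 hB2 hAc hBc P1 P2
  have hck' : ∀ k ∈ Finset.range m, pcnt B A k = 2 := fun k hk => (pcnt_comm B A k).trans (hck k hk)
  obtain ⟨kA, hkA, hA1, hA2', hA3, hA4⟩ := full_pair m A B P1 P2 hck x hxA hxB (hA2 x hxA)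
  obtain ⟨kB, hkB, hB1, hB2', hB3, hB4⟩ := full_pair m B A P2 P1 hck' y hyB hyA (hB2 y hyB)
  rcases lt_trichotomy kA kB with h | h | h
  · have : 2*kB+1 ∈ A := step_lemma m A B P1 hck kB hkB kA (le_of_lt h) hA2'
    exact P2 (2*kB) hB1 this
  · subst h; exact hA4 hB2'
  · have : 2*kA+1 ∈ B := step_lemma m B A P2 hck' kA hkA kB (le_of_lt h) hB2'
    exact P1 (2*kA) hA1 this

/-! ### Path graph edges -/

def pedge (n i : ℕ) (h : i + 1 < n) : Sym2 (Fin n) :=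
  s(⟨i, Nat.lt_of_succ_lt h⟩, ⟨i+1, h⟩)

def idx {n : ℕ} : Sym2 (Fin n) → ℕ :=
  Sym2.lift ⟨fun a b => min a.1 b.1, fun a b => by simp [min_comm]⟩

lemma idx_pedge (n i : ℕ) (h : i + 1 < n) : idx (pedge n i h) = i := by
  simp [idx, pedge]

lemma edge_char {n : ℕ} {e : Sym2 (Fin n)} (he : e ∈ (pathGraph n).edgeSet) :
    ∃ i : ℕ, ∃ h : i + 1 < n, e = pedge n i h := by
  induction e with
  | _ u v =>
    rw [SimpleGraph.mem_edgeSet, pathGraph_adj] at he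
    rcases he with h | h
    · have hb : u.1 + 1 < n := by omega
      refine ⟨u.1, hb, ?_⟩
      have h1 : (⟨u.1, Nat.lt_of_succ_lt hb⟩ : Fin n) = u := Fin.ext rfl
      have h2 : (⟨u.1 + 1, hb⟩ : Fin n) = v := Fin.ext h
      unfold pedge
      rw [h1, h2]
    · have hb : v.1 + 1 < n := by omega
      refine ⟨v.1, hb, ?_⟩
      have h1 : (⟨v.1, Nat.lt_of_succ_lt hb⟩ : Fin n) = v := Fin.ext rfl
      have h2 : (⟨v.1 + 1, hb⟩ : Fin n) = u := Fin.ext h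
      unfold pedge
      rw [h1, h2, Sym2.eq_swap]

lemma pedge_congr {n i j : ℕ} (hi : i + 1 < n) (hj : j + 1 < n) (h : i = j) :
    pedge n i hi = pedge n j hj := by subst h; rfl

lemma pedge_inj {n i j : ℕ} {hi : i + 1 < n} {hj : j + 1 < n}
    (h : pedge n i hi = pedge n j hj) : i = j := by
  have := congrArg idx h
  rwa [idx_pedge, idx_pedge] at this

lemma pedge_share {n i j : ℕ} (hi : i + 1 < n) (hj : j + 1 < n)
    (h : i = j ∨ i + 1 = j ∨ j + 1 = i) : shareVertex (pedge n i hi) (pedge n j hj) := by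
  rcases h with rfl | h | h
  · exact ⟨⟨i, Nat.lt_of_succ_lt hi⟩, by simp [pedge], by simp [pedge]⟩
  · exact ⟨⟨i+1, hi⟩, by simp [pedge],
      by simp only [pedge, Sym2.mem_iff, Fin.mk.injEq]; omega⟩
  · exact ⟨⟨j+1, hj⟩, by simp only [pedge, Sym2.mem_iff, Fin.mk.injEq]; omega,
      by simp [pedge]⟩

theorem path_odd_half_sets_adjacent (n : ℕ) (hn : 3 ≤ n) (ho : Odd n) :
    (∀ S T : Finset (Sym2 (Fin n)), ↑S ⊆ (SimpleGraph.pathGraph n).edgeSet →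
      ↑T ⊆ (SimpleGraph.pathGraph n).edgeSet →
      S.card = (n - 1) / 2 → T.card = (n - 1) / 2 →
      ∃ e ∈ S, ∃ f ∈ T, shareVertex e f) ∧
    SuperLineComplete (SimpleGraph.pathGraph n) ((n - 1) / 2) := by
  classical
  obtain ⟨m, hm⟩ := ho
  have hm1 : 1 ≤ m := by omega
  have hhalf : (n - 1) / 2 = m := by omega
  -- generic transfer facts
  have himg : ∀ (S : Finset (Sym2 (Fin n))), (↑S : Set (Sym2 (Fin n))) ⊆ (pathGraph n).edgeSet →
      (S.image idx).card = S.card ∧ (∀ i ∈ S.image idx, i < 2*m) ∧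
      (∀ i ∈ S.image idx, ∃ e ∈ S, ∃ h : i + 1 < n, e = pedge n i h) := by
    intro S hS
    have hchar : ∀ e ∈ S, ∃ i : ℕ, ∃ h : i + 1 < n, e = pedge n i h := by
      intro e he; exact edge_char (hS he)
    refine ⟨?_, ?_, ?_⟩
    · apply Finset.card_image_of_injOn
      intro e he f hf hef
      obtain ⟨i, hi, rfl⟩ := hchar e he
      obtain ⟨j, hj, rfl⟩ := hchar f hf
      rw [idx_pedge, idx_pedge] at hef
      subst hef; rfl
    · intro i hi
      obtain ⟨e, he, rfl⟩ := Finset.mem_image.1 hi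
      obtain ⟨j, hj, rfl⟩ := hchar e he
      rw [idx_pedge]; omega
    · intro i hi
      obtain ⟨e, he, rfl⟩ := Finset.mem_image.1 hi
      obtain ⟨j, hj, rfl⟩ := hchar e he
      rw [idx_pedge]
      exact ⟨_, he, hj, rfl⟩
  constructor
  · -- part 1
    intro S T hS hT hSc hTc
    by_contra hcon
    push_neg at hcon
    obtain ⟨hScard, hSbd, hSlift⟩ := himg S hS
    obtain ⟨hTcard, hTbd, hTlift⟩ := himg T hT
    set S' := S.image idx with hS'
    set T' := T.image idx with hT'
    have hP : ∀ i j, i ∈ S' → j ∈ T' → (i = j ∨ i + 1 = j ∨ j + 1 = i) → False := by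
      intro i j hi hj hadj
      obtain ⟨e, he, h1, rfl⟩ := hSlift i hi
      obtain ⟨f, hf, h2, rfl⟩ := hTlift j hj
      exact hcon _ he _ hf (pedge_share h1 h2 hadj)
    -- disjoint
    have hdisj : ∀ i, i ∈ S' → i ∉ T' := fun i hi hit => hP i i hi hit (Or.inl rfl)
    obtain ⟨x, hx⟩ := Finset.card_pos.1 (by rw [hScard, hSc, hhalf]; omega : 0 < S'.card)
    obtain ⟨y, hy⟩ := Finset.card_pos.1 (by rw [hTcard, hTc, hhalf]; omega : 0 < T'.card)
    exact core m S' T' hSbd hTbd (by rw [hScard, hSc, hhalf]) (by rw [hTcard, hTc, hhalf])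
      (fun i hi hj => hP i (i+1) hi hj (Or.inr (Or.inl rfl)))
      (fun i hi hj => hP (i+1) i hj hi (Or.inr (Or.inr rfl)))
      x hx (hdisj x hx) y hy (fun hyS => hdisj y hyS hy)
  · -- part 2
    intro A B hA hB hAc hBc hne
    by_contra hcon
    push_neg at hcon
    obtain ⟨hAcard, hAbd, hAlift⟩ := himg A hA
    obtain ⟨hBcard, hBbd, hBlift⟩ := himg B hB
    set A' := A.image idx with hA'
    set B' := B.image idx with hB'
    have hP : ∀ i j, i ∈ A' → j ∈ B' → i ≠ j → (i + 1 = j ∨ j + 1 = i) → False := by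
      intro i j hi hj hij hadj
      obtain ⟨e, he, h1, rfl⟩ := hAlift i hi
      obtain ⟨f, hf, h2, rfl⟩ := hBlift j hj
      have hef : pedge n i h1 ≠ pedge n j h2 := fun h => hij (pedge_inj h)
      exact hcon _ he _ hf hef (pedge_share h1 h2 (Or.inr hadj))
    -- A' ≠ B'
    have hAB' : A' ≠ B' := by
      intro h
      apply hne
      ext e
      constructor
      · intro he
        have : idx e ∈ B' := h ▸ Finset.mem_image_of_mem idx he
        obtain ⟨f, hf, h2, hfe⟩ := hBlift _ this
        obtain ⟨i, hi, rfl⟩ := edge_char (hA he)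
        rw [hfe, pedge_congr h2 hi (idx_pedge n i hi)] at hf
        exact hf
      · intro he
        have : idx e ∈ A' := h ▸ Finset.mem_image_of_mem idx he
        obtain ⟨f, hf, h2, hfe⟩ := hAlift _ this
        obtain ⟨i, hi, rfl⟩ := edge_char (hB he)
        rw [hfe, pedge_congr h2 hi (idx_pedge n i hi)] at hf
        exact hf
    have hcards : A'.card = m ∧ B'.card = m :=
      ⟨by rw [hAcard, hAc, hhalf], by rw [hBcard, hBc, hhalf]⟩
    -- get elements of the symmetric differences
    have hxex : ∃ x ∈ A', x ∉ B' := by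
      by_contra hno
      push_neg at hno
      exact hAB' (Finset.eq_of_subset_of_card_le hno (by omega))
    have hyex : ∃ y ∈ B', y ∉ A' := by
      by_contra hno
      push_neg at hno
      exact hAB' (Finset.eq_of_subset_of_card_le hno (by omega)).symm
    obtain ⟨x, hx, hx'⟩ := hxex
    obtain ⟨y, hy, hy'⟩ := hyex
    exact core m A' B' hAbd hBbd hcards.1 hcards.2
      (fun i hi hj => by
        by_cases hij : i = i + 1
        · omega
        · exact hP i (i+1) hi hj (by omega) (Or.inl rfl))
      (fun i hi hj => hP (i+1) i hj hi (by omega) (Or.inr rfl))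
      x hx hx' y hy hy'
end

section
/- Let n and m both be even with n, m ≥ 2 and m ≤ n. Then the line completion number of the grid graph P_n × P_m equals mn + 1 − (m+n)/2 − m/2. -/
/-!
Below the threshold `2r ≤ 2mn - 2m - n` the two halves of the grid (`n` even) each carry
`mn - m - n/2` edges and share no vertex, so `L_r` is not complete. Above it, suppose `A ≠ B` are
`r`-sets of edges with no edge of `A` meeting a different edge of `B`. Then `A \ B`, `B \ A` and
the matching `A ∩ B` live on pairwise disjoint vertex sets `X`, `Y`, `S`. Edges supported on a
set `X` spanning `s` columns and `p` rows number at most `2|X| - s - p`, since every horizontal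
(vertical) edge is determined by its left (lower) end, and the last vertex of a row (column) is
no such end. Comparing `X` and `Y` with their bounding boxes, whose overlap is forced once
`p + p' > m` and `s + s' > n`, a short case analysis gives `2|A \ B| + |S| + 2m + n ≤ 2mn`.
-/

open SimpleGraph

open Finset

section EdgeSupport

variable {V : Type*}

lemma not_superLineComplete_of_separated {G : SimpleGraph V} {r : ℕ}
    {E F : Finset (Sym2 V)} (hE : ↑E ⊆ G.edgeSet) (hF : ↑F ⊆ G.edgeSet)
    (hEF : ∀ e ∈ E, ∀ f ∈ F, ¬ shareVertex e f) (hr : 0 < r) (hrE : r ≤ #E)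
    (hrF : r ≤ #F) :
    ¬ SuperLineComplete G r := by
  intro hG
  obtain ⟨A, hAE, hA⟩ := exists_subset_card_eq hrE
  obtain ⟨B, hBF, hB⟩ := exists_subset_card_eq hrF
  obtain ⟨e, he⟩ := card_pos.1 (hA ▸ hr)
  have hAB : A ≠ B := fun h =>
    hEF e (hAE he) e (hBF (h ▸ he)) ⟨_, Sym2.out_fst_mem e, Sym2.out_fst_mem e⟩
  obtain ⟨e, he, f, hf, -, hef⟩ :=
    hG A B (.trans (by simpa) hE) (.trans (by simpa) hF) hA hB hAB
  exact hEF e (hAE he) f (hBF hf) hef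

variable [DecidableEq V]

def edgeSupport (C : Finset (Sym2 V)) : Finset V := C.biUnion Sym2.toFinset

lemma mem_edgeSupport {C : Finset (Sym2 V)} {v : V} :
    v ∈ edgeSupport C ↔ ∃ e ∈ C, v ∈ e := by
  simp [edgeSupport, Sym2.mem_toFinset]

lemma disjoint_edgeSupport {C D : Finset (Sym2 V)}
    (h : ∀ e ∈ C, ∀ f ∈ D, ¬ shareVertex e f) :
    Disjoint (edgeSupport C) (edgeSupport D) := by
  refine disjoint_left.2 fun v hvC hvD => ?_
  obtain ⟨e, he, hve⟩ := mem_edgeSupport.1 hvC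
  obtain ⟨f, hf, hvf⟩ := mem_edgeSupport.1 hvD
  exact h e he f hf ⟨v, hve, hvf⟩

lemma card_edgeSupport_of_pairwise {I : Finset (Sym2 V)} (hI : ∀ e ∈ I, ¬ e.IsDiag)
    (h : (I : Set (Sym2 V)).Pairwise fun e f => ¬ shareVertex e f) :
    #(edgeSupport I) = 2 * #I := by
  rw [edgeSupport, card_biUnion,
    sum_congr rfl fun e he => Sym2.card_toFinset_of_not_isDiag e (hI e he), sum_const,
    smul_eq_mul, mul_comm]
  intro e he f hf hef
  exact disjoint_left.2 fun v hve hvf =>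
    h he hf hef ⟨v, Sym2.mem_toFinset.1 hve, Sym2.mem_toFinset.1 hvf⟩

lemma disjoint_edgeSupport_sdiff {A B : Finset (Sym2 V)}
    (hsep : ∀ e ∈ A, ∀ f ∈ B, e ≠ f → ¬ shareVertex e f) :
    Disjoint (edgeSupport (A \ B)) (edgeSupport (B \ A)) := by
  refine disjoint_edgeSupport fun e he f hf => ?_
  rw [mem_sdiff] at he hf
  exact hsep e he.1 f hf.1 fun h => he.2 (h ▸ hf.1)

lemma card_edgeSupport_sdiff_add_le [Fintype V] {G : SimpleGraph V} {A B : Finset (Sym2 V)}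
    (hA : ↑A ⊆ G.edgeSet) (hsep : ∀ e ∈ A, ∀ f ∈ B, e ≠ f → ¬ shareVertex e f) :
    #(edgeSupport (A \ B)) + #(edgeSupport (B \ A)) + 2 * #(A ∩ B) ≤ Fintype.card V := by
  have hXS : Disjoint (edgeSupport (A \ B)) (edgeSupport (A ∩ B)) := by
    refine disjoint_edgeSupport fun e he f hf => ?_
    rw [mem_sdiff] at he
    exact hsep e he.1 f (mem_inter.1 hf).2 fun h => he.2 (h ▸ (mem_inter.1 hf).2)
  have hSY : Disjoint (edgeSupport (A ∩ B)) (edgeSupport (B \ A)) := by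
    refine disjoint_edgeSupport fun e he f hf => ?_
    rw [mem_sdiff] at hf
    exact hsep e (mem_inter.1 he).1 f hf.1 fun h => hf.2 (h ▸ (mem_inter.1 he).1)
  have hS : #(edgeSupport (A ∩ B)) = 2 * #(A ∩ B) := by
    refine card_edgeSupport_of_pairwise
      (fun e he => G.not_isDiag_of_mem_edgeSet (hA (mem_inter.1 he).1)) fun e he f hf hef => ?_
    exact hsep e (mem_inter.1 he).1 f (mem_inter.1 hf).2 hef
  rw [← hS, ← card_union_of_disjoint (disjoint_edgeSupport_sdiff hsep),
    ← card_union_of_disjoint (disjoint_union_left.2 ⟨hXS, hSY.symm⟩)]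
  exact card_le_univ _

end EdgeSupport

/-- `T` misses the `g`-maximum of every `f`-fibre of `X`. -/
lemma card_add_card_image_le {γ α β : Type*} [LinearOrder α] [DecidableEq β]
    {X T : Finset γ} (f : γ → β) (g : γ → α) (hTX : T ⊆ X)
    (hT : ∀ u ∈ T, ∃ w ∈ X, f w = f u ∧ g u < g w) : #T + #(X.image f) ≤ #X := by
  classical
  have hfibre : X.image f ⊆ (X \ T).image f := by
    intro b hb
    obtain ⟨v, hv, rfl⟩ := mem_image.1 hb
    obtain ⟨w, hw, hmax⟩ :=
      exists_max_image (X.filter (f · = f v)) g ⟨v, mem_filter.2 ⟨hv, rfl⟩⟩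
    obtain ⟨hwX, hwv⟩ := mem_filter.1 hw
    refine mem_image.2 ⟨w, mem_sdiff.2 ⟨hwX, fun hwT => ?_⟩, hwv⟩
    obtain ⟨w', hw'X, hfw', hlt⟩ := hT w hwT
    exact (hmax w' (mem_filter.2 ⟨hw'X, hfw'.trans hwv⟩)).not_gt hlt
  have := (card_le_card hfibre).trans card_image_le
  rw [card_sdiff_of_subset hTX] at this
  have := card_le_card hTX
  omega

section Boxes

variable {α β : Type*} [DecidableEq α] [DecidableEq β]

lemma card_le_card_image_mul (X : Finset (α × β)) :
    #X ≤ #(X.image Prod.fst) * #(X.image Prod.snd) :=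
  (card_le_card subset_product).trans_eq (card_product _ _)

/-- `X ∪ Y` lies in the union of the two bounding boxes, whose intersection is the product of the
intersected projections. -/
lemma card_add_card_add_mul_le {X Y : Finset (α × β)} (hXY : Disjoint X Y) :
    #X + #Y +
        #(X.image Prod.fst ∩ Y.image Prod.fst) * #(X.image Prod.snd ∩ Y.image Prod.snd) ≤
      #(X.image Prod.fst) * #(X.image Prod.snd) + #(Y.image Prod.fst) * #(Y.image Prod.snd) := by
  have hunion := card_union_add_card_inter (X.image Prod.fst ×ˢ X.image Prod.snd)
    (Y.image Prod.fst ×ˢ Y.image Prod.snd)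
  have hsub :=
    card_le_card (union_subset_union (subset_product (s := X)) (subset_product (s := Y)))
  rw [product_inter_product, card_product, card_product, card_product] at hunion
  rw [card_union_of_disjoint hXY] at hsub
  omega

end Boxes

/-- Otherwise `(2p - 1)(2s - 1) ≤ (m - 2)²`, too few cells to carry `c` edges. -/
lemma le_add_of_box {m n z x p s c : ℤ} (hmn : m ≤ n) (hp : 1 ≤ p) (hs : 1 ≤ s)
    (hx : x ≤ s * p) (hcx : c + s + p ≤ 2 * x) (hz : z + 4 ≤ 2 * m + n)
    (hc : 2 * m * n < 2 * c + 2 * m + n + z) : m ≤ p + s := by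
  by_contra! h
  nlinarith [mul_nonneg (by linarith : (0:ℤ) ≤ n - m) (by linarith : (0:ℤ) ≤ m - 1),
    mul_nonneg (by linarith : (0:ℤ) ≤ m - 1 - p - s) (by linarith : (0:ℤ) ≤ m - 3 + p + s)]

/-- `a, a'` and `b, b'` count the rows and columns missed by two overlapping boxes; the cells
missed by both boxes number at least `a * b' + a' * b`. -/
lemma false_of_overlapping_boxes {m n z a a' b b' : ℤ} (hmn : m ≤ n) (hz : 0 ≤ z)
    (ha : 0 ≤ a) (ha' : 0 ≤ a') (hb : 0 ≤ b) (hb' : 0 ≤ b')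
    (haa : a + a' ≤ m - 1) (hbb : b + b' ≤ n - 1) (hsum : n + z + 1 ≤ a + a' + b + b')
    (hab : z + 1 ≤ a + b) (hab' : z + 1 ≤ a' + b') (hz' : a * b' + a' * b ≤ z) : False := by
  rcases (show a = 0 ∨ 1 ≤ a by omega) with h | h <;>
  rcases (show a' = 0 ∨ 1 ≤ a' by omega) with h' | h' <;>
  rcases (show b = 0 ∨ 1 ≤ b by omega) with k | k <;>
  rcases (show b' = 0 ∨ 1 ≤ b' by omega) with k' | k' <;>
  subst_vars <;> nlinarith

/-- Two disjoint vertex sets of the `n × m` grid, of sizes `x` and `y`, span `s` and `s'` columns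
and `p` and `p'` rows, share `i` columns and `j` rows, leave `z` vertices uncovered, and each
supports `c` edges. -/
lemma two_mul_add_le_of_boxes {m n x y z p s p' s' c i j : ℤ} (hm : 2 ≤ m) (hmn : m ≤ n)
    (hz : 0 ≤ z) (hxyz : x + y + z = m * n)
    (hp : 1 ≤ p) (hpm : p ≤ m) (hp' : 1 ≤ p') (hp'm : p' ≤ m)
    (hs : 1 ≤ s) (hsn : s ≤ n) (hs' : 1 ≤ s') (hs'n : s' ≤ n)
    (hx : x ≤ s * p) (hy : y ≤ s' * p') (hcx : c + s + p ≤ 2 * x)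
    (hcy : c + s' + p' ≤ 2 * y)
    (hi : s + s' ≤ n + i) (hj : p + p' ≤ m + j) (hj0 : 0 ≤ j)
    (hovl : x + y + i * j ≤ s * p + s' * p') :
    2 * c + 2 * m + n + z ≤ 2 * m * n := by
  by_contra! hc
  have hsum : p + s + p' + s' + z + 1 ≤ 2 * m + n := by linarith
  have hbig := le_add_of_box hmn hp hs hx hcx (by linarith) hc
  have hbig' := le_add_of_box hmn hp' hs' hy hcy (by linarith) hc
  rcases le_or_gt (p + p') m with hrows | hrows
  · have hz1 : p * (n - s) + (m - p) * (n - s') ≤ z := by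
      nlinarith [mul_le_mul_of_nonneg_right (by linarith : p' ≤ m - p) (by linarith : 0 ≤ s')]
    have hz2 : p' * (n - s') + (m - p') * (n - s) ≤ z := by
      nlinarith [mul_le_mul_of_nonneg_right (by linarith : p ≤ m - p') (by linarith : 0 ≤ s)]
    rcases (show s' = n ∨ s' < n by omega) with hs'eq | hs'lt
    · rcases (show s = n ∨ s < n by omega) with hseq | hslt
      · subst hseq hs'eq
        nlinarith
      · nlinarith
    · nlinarith
  rcases le_or_gt (s + s') n with hcols | hcols
  · have hz1 : (m - p) * s + (m - p') * (n - s) ≤ z := by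
      nlinarith [mul_le_mul_of_nonneg_left (by linarith : s' ≤ n - s) (by linarith : 0 ≤ p')]
    have hz2 : (m - p') * s' + (m - p) * (n - s') ≤ z := by
      nlinarith [mul_le_mul_of_nonneg_left (by linarith : s ≤ n - s') (by linarith : 0 ≤ p)]
    rcases (show p' = m ∨ p' < m by omega) with hp'eq | hp'lt
    · rcases (show p = m ∨ p < m by omega) with hpeq | hplt
      · subst hpeq hp'eq
        nlinarith
      · nlinarith
    · nlinarith
  have hij : (p + p' - m) * (s + s' - n) ≤ i * j := by
    rw [mul_comm i]
    exact mul_le_mul (by linarith) (by linarith) (by linarith) hj0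
  refine false_of_overlapping_boxes (a := m - p) (a' := m - p') (b := n - s) (b' := n - s')
    hmn hz (by linarith) (by linarith) (by linarith) (by linarith) (by linarith) (by linarith)
    (by linarith) (by linarith) (by linarith) ?_
  linear_combination hovl + hij - hxyz

section Grid

variable {n m : ℕ}

/-- In the product order the two ends of a grid edge are comparable, so they are `e.inf` and
`e.sup`. -/
lemma gridGraph_edge {e : Sym2 (Fin n × Fin m)} (he : e ∈ (gridGraph n m).edgeSet) :
    e = s(e.inf, e.sup) ∧
      (e.inf.2 = e.sup.2 ∧ (e.inf.1 : ℕ) + 1 = e.sup.1 ∨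
        e.inf.1 = e.sup.1 ∧ (e.inf.2 : ℕ) + 1 = e.sup.2) := by
  induction e with
  | _ u v =>
    rw [mem_edgeSet, gridGraph, boxProd_adj, pathGraph_adj, pathGraph_adj] at he
    obtain ⟨u1, u2⟩ := u
    obtain ⟨v1, v2⟩ := v
    simp only [Sym2.inf_mk, Sym2.sup_mk, Prod.mk_inf_mk, Prod.mk_sup_mk] at he ⊢
    rcases he with ⟨h | h, rfl⟩ | ⟨h | h, rfl⟩
    · have : u1 ≤ v1 := by rw [Fin.le_def]; omega
      simp [this, h]
    · have : v1 ≤ u1 := by rw [Fin.le_def]; omega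
      simp [this, h, Sym2.eq_swap]
    · have : u2 ≤ v2 := by rw [Fin.le_def]; omega
      simp [this, h]
    · have : v2 ≤ u2 := by rw [Fin.le_def]; omega
      simp [this, h, Sym2.eq_swap]

lemma gridGraph_edge_ext {e f : Sym2 (Fin n × Fin m)} (he : e ∈ (gridGraph n m).edgeSet)
    (hf : f ∈ (gridGraph n m).edgeSet) (hinf : e.inf = f.inf) (hsup : e.sup = f.sup) :
    e = f := by
  rw [(gridGraph_edge he).1, (gridGraph_edge hf).1, hinf, hsup]

lemma gridGraph_edge_of_snd_eq {e : Sym2 (Fin n × Fin m)} (he : e ∈ (gridGraph n m).edgeSet)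
    (h : e.inf.2 = e.sup.2) : (e.inf.1 : ℕ) + 1 = e.sup.1 := by
  rcases (gridGraph_edge he).2 with h' | h'
  · exact h'.2
  · have := congrArg Fin.val h
    omega

lemma gridGraph_edge_of_snd_ne {e : Sym2 (Fin n × Fin m)} (he : e ∈ (gridGraph n m).edgeSet)
    (h : ¬ e.inf.2 = e.sup.2) : e.inf.1 = e.sup.1 ∧ (e.inf.2 : ℕ) + 1 = e.sup.2 :=
  (gridGraph_edge he).2.resolve_left fun h' => h h'.1

lemma inf_mem_edgeSupport_and_sup_mem {C : Finset (Sym2 (Fin n × Fin m))}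
    (hC : ↑C ⊆ (gridGraph n m).edgeSet) {e : Sym2 (Fin n × Fin m)} (he : e ∈ C) :
    e.inf ∈ edgeSupport C ∧ e.sup ∈ edgeSupport C := by
  have hmem : ∀ {e : Sym2 (Fin n × Fin m)} {a b}, e = s(a, b) → a ∈ e ∧ b ∈ e := by
    rintro _ a b rfl
    simp
  obtain ⟨hinf, hsup⟩ := hmem (gridGraph_edge (hC he)).1
  exact ⟨mem_edgeSupport.2 ⟨e, he, hinf⟩, mem_edgeSupport.2 ⟨e, he, hsup⟩⟩

lemma card_filter_snd_eq_add_card_image_snd_le {C : Finset (Sym2 (Fin n × Fin m))}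
    (hC : ↑C ⊆ (gridGraph n m).edgeSet) :
    #(C.filter fun e => e.inf.2 = e.sup.2) + #((edgeSupport C).image Prod.snd) ≤
      #(edgeSupport C) := by
  have hinj : Set.InjOn Sym2.inf
      (C.filter fun e => e.inf.2 = e.sup.2 : Set (Sym2 (Fin n × Fin m))) := by
    intro e he f hf h
    simp only [mem_coe, mem_filter] at he hf
    refine gridGraph_edge_ext (hC he.1) (hC hf.1) h (Prod.ext (Fin.ext ?_) ?_)
    · rw [← gridGraph_edge_of_snd_eq (hC he.1) he.2, ← gridGraph_edge_of_snd_eq (hC hf.1) hf.2,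
        h]
    · rw [← he.2, h, hf.2]
  rw [← card_image_of_injOn hinj]
  refine card_add_card_image_le Prod.snd Prod.fst
    (image_subset_iff.2 fun e he => (inf_mem_edgeSupport_and_sup_mem hC (mem_filter.1 he).1).1)
    fun u hu => ?_
  obtain ⟨e, he, rfl⟩ := mem_image.1 hu
  obtain ⟨heC, hsnd⟩ := mem_filter.1 he
  have := gridGraph_edge_of_snd_eq (hC heC) hsnd
  exact ⟨e.sup, (inf_mem_edgeSupport_and_sup_mem hC heC).2, hsnd.symm,
    by rw [Fin.lt_def]; omega⟩

lemma card_filter_snd_ne_add_card_image_fst_le {C : Finset (Sym2 (Fin n × Fin m))}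
    (hC : ↑C ⊆ (gridGraph n m).edgeSet) :
    #(C.filter fun e => ¬ e.inf.2 = e.sup.2) + #((edgeSupport C).image Prod.fst) ≤
      #(edgeSupport C) := by
  have hinj : Set.InjOn Sym2.inf
      (C.filter fun e => ¬ e.inf.2 = e.sup.2 : Set (Sym2 (Fin n × Fin m))) := by
    intro e he f hf h
    simp only [mem_coe, mem_filter] at he hf
    obtain ⟨he1, he2⟩ := gridGraph_edge_of_snd_ne (hC he.1) he.2
    obtain ⟨hf1, hf2⟩ := gridGraph_edge_of_snd_ne (hC hf.1) hf.2
    refine gridGraph_edge_ext (hC he.1) (hC hf.1) h (Prod.ext ?_ (Fin.ext ?_))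
    · rw [← he1, h, hf1]
    · rw [← he2, ← hf2, h]
  rw [← card_image_of_injOn hinj]
  refine card_add_card_image_le Prod.fst Prod.snd
    (image_subset_iff.2 fun e he => (inf_mem_edgeSupport_and_sup_mem hC (mem_filter.1 he).1).1)
    fun u hu => ?_
  obtain ⟨e, he, rfl⟩ := mem_image.1 hu
  obtain ⟨heC, hsnd⟩ := mem_filter.1 he
  obtain ⟨hfst, hlt⟩ := gridGraph_edge_of_snd_ne (hC heC) hsnd
  exact ⟨e.sup, (inf_mem_edgeSupport_and_sup_mem hC heC).2, hfst.symm,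
    by rw [Fin.lt_def]; omega⟩

lemma card_add_card_image_fst_add_card_image_snd_le {C : Finset (Sym2 (Fin n × Fin m))}
    (hC : ↑C ⊆ (gridGraph n m).edgeSet) :
    #C + #((edgeSupport C).image Prod.fst) + #((edgeSupport C).image Prod.snd) ≤
      2 * #(edgeSupport C) := by
  have := card_filter_add_card_filter_not (s := C) (p := fun e => e.inf.2 = e.sup.2)
  have := card_filter_snd_eq_add_card_image_snd_le hC
  have := card_filter_snd_ne_add_card_image_fst_le hC
  omega

lemma card_image_fst_le (X : Finset (Fin n × Fin m)) : #(X.image Prod.fst) ≤ n :=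
  (card_le_univ _).trans_eq (Fintype.card_fin n)

lemma card_image_snd_le (X : Finset (Fin n × Fin m)) : #(X.image Prod.snd) ≤ m :=
  (card_le_univ _).trans_eq (Fintype.card_fin m)

lemma two_mul_add_le_of_disjoint (hm : 2 ≤ m) (hmn : m ≤ n) {X Y : Finset (Fin n × Fin m)}
    (hXY : Disjoint X Y) {c : ℕ} (hc : 0 < c)
    (hX : c + #(X.image Prod.fst) + #(X.image Prod.snd) ≤ 2 * #X)
    (hY : c + #(Y.image Prod.fst) + #(Y.image Prod.snd) ≤ 2 * #Y) :
    2 * c + 2 * m + n + m * n ≤ 2 * (m * n) + #X + #Y := by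
  have hXne : X.Nonempty := card_pos.1 (by omega)
  have hYne : Y.Nonempty := card_pos.1 (by omega)
  have hi := card_union_add_card_inter (X.image Prod.fst) (Y.image Prod.fst)
  have hj := card_union_add_card_inter (X.image Prod.snd) (Y.image Prod.snd)
  have hi' := card_image_fst_le (X ∪ Y)
  have hj' := card_image_snd_le (X ∪ Y)
  rw [image_union] at hi' hj'
  have hz : (#X + #Y : ℤ) ≤ m * n := by
    rw [← Nat.cast_add, ← card_union_of_disjoint hXY, mul_comm]
    exact_mod_cast (card_le_univ _).trans_eq (by simp)
  have := two_mul_add_le_of_boxes (m := m) (n := n) (x := #X) (y := #Y) (z := m * n - #X - #Y)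
    (p := #(X.image Prod.snd)) (s := #(X.image Prod.fst))
    (p' := #(Y.image Prod.snd)) (s' := #(Y.image Prod.fst)) (c := c)
    (i := #(X.image Prod.fst ∩ Y.image Prod.fst)) (j := #(X.image Prod.snd ∩ Y.image Prod.snd))
    (by exact_mod_cast hm) (by exact_mod_cast hmn) (by linarith) (by ring)
    (by exact_mod_cast (hXne.image _).card_pos) (by exact_mod_cast card_image_snd_le X)
    (by exact_mod_cast (hYne.image _).card_pos) (by exact_mod_cast card_image_snd_le Y)
    (by exact_mod_cast (hXne.image _).card_pos) (by exact_mod_cast card_image_fst_le X)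
    (by exact_mod_cast (hYne.image _).card_pos) (by exact_mod_cast card_image_fst_le Y)
    (by exact_mod_cast card_le_card_image_mul X) (by exact_mod_cast card_le_card_image_mul Y)
    (by exact_mod_cast hX) (by exact_mod_cast hY)
    (by norm_cast; omega) (by norm_cast; omega) (by positivity)
    (by exact_mod_cast card_add_card_add_mul_le hXY)
  linarith

lemma two_mul_card_add_le_of_separated (hm : 2 ≤ m) (hmn : m ≤ n)
    {A B : Finset (Sym2 (Fin n × Fin m))} (hA : ↑A ⊆ (gridGraph n m).edgeSet)
    (hB : ↑B ⊆ (gridGraph n m).edgeSet) (hAB : #A = #B) (hne : A ≠ B)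
    (hsep : ∀ e ∈ A, ∀ f ∈ B, e ≠ f → ¬ shareVertex e f) :
    2 * #A + 2 * m + n ≤ 2 * (m * n) := by
  have hA' := card_sdiff_add_card_inter A B
  have hB' := card_sdiff_add_card_inter B A
  rw [inter_comm] at hB'
  have hC : 0 < #(A \ B) :=
    card_pos.2 (sdiff_nonempty.2 fun h => hne (eq_of_subset_of_card_le h hAB.ge))
  have hX := card_add_card_image_fst_add_card_image_snd_le (C := A \ B) (.trans (by simp) hA)
  have hY := card_add_card_image_fst_add_card_image_snd_le (C := B \ A) (.trans (by simp) hB)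
  have hsupp := card_edgeSupport_sdiff_add_le hA hsep
  rw [Fintype.card_prod, Fintype.card_fin, Fintype.card_fin] at hsupp
  have := two_mul_add_le_of_disjoint hm hmn (disjoint_edgeSupport_sdiff hsep) hC hX (by omega)
  nlinarith

lemma exists_strip_edges (c w : ℕ) (hcw : c + w ≤ n) :
    ∃ E : Finset (Sym2 (Fin n × Fin m)), ↑E ⊆ (gridGraph n m).edgeSet ∧
      (∀ e ∈ E, ∀ v ∈ e, c ≤ (v.1 : ℕ) ∧ (v.1 : ℕ) < c + w) ∧
      #E = (w - 1) * m + w * (m - 1) := by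
  let horiz : Fin (w - 1) × Fin m → Sym2 (Fin n × Fin m) := fun ⟨i, j⟩ =>
    s((⟨c + i, by omega⟩, j), (⟨c + i + 1, by omega⟩, j))
  let vert : Fin w × Fin (m - 1) → Sym2 (Fin n × Fin m) := fun ⟨i, j⟩ =>
    s((⟨c + i, by omega⟩, ⟨j, by omega⟩), (⟨c + i, by omega⟩, ⟨j + 1, by omega⟩))
  have hinj : Function.Injective (Sum.elim horiz vert) := by
    refine Function.Injective.sumElim ?_ ?_ ?_
    · rintro ⟨i, j⟩ ⟨i', j'⟩ h
      simp only [horiz, Sym2.eq_iff, Prod.mk.injEq, Fin.ext_iff] at h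
      simp only [Prod.ext_iff, Fin.ext_iff]
      omega
    · rintro ⟨i, j⟩ ⟨i', j'⟩ h
      simp only [vert, Sym2.eq_iff, Prod.mk.injEq, Fin.ext_iff] at h
      simp only [Prod.ext_iff, Fin.ext_iff]
      omega
    · rintro ⟨i, j⟩ ⟨i', j'⟩ h
      simp only [horiz, vert, Sym2.eq_iff, Prod.mk.injEq, Fin.ext_iff] at h
      omega
  refine ⟨univ.map ⟨_, hinj⟩, ?_, ?_, by simp⟩
  · rintro _ he
    obtain ⟨⟨i, j⟩ | ⟨i, j⟩, -, rfl⟩ := mem_map.1 he <;>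
      simp [horiz, vert, gridGraph, boxProd_adj, pathGraph_adj]
  · intro e he v hv
    obtain ⟨⟨i, j⟩ | ⟨i, j⟩, -, rfl⟩ := mem_map.1 he <;>
      simp only [horiz, vert, Function.Embedding.coeFn_mk, Sum.elim_inl, Sum.elim_inr,
        Sym2.mem_iff] at hv <;> rcases hv with rfl | rfl <;> simp <;> omega

theorem superLineComplete_gridGraph_iff (hm : 2 ≤ m) (hmn : m ≤ n) (hn : Even n) {r : ℕ}
    (hr : 0 < r) : SuperLineComplete (gridGraph n m) r ↔ 2 * (m * n) < 2 * r + 2 * m + n := by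
  refine ⟨fun hG => ?_, fun h A B hA hB hAr hBr hne => ?_⟩
  · by_contra! hle
    obtain ⟨b, rfl⟩ := hn
    obtain ⟨E, hE, hEv, hEc⟩ := exists_strip_edges (n := b + b) (m := m) 0 b (by omega)
    obtain ⟨F, hF, hFv, hFc⟩ := exists_strip_edges (n := b + b) (m := m) b b le_rfl
    have hcount : 2 * ((b - 1) * m + b * (m - 1)) + 2 * m + (b + b) = 2 * (m * (b + b)) := by
      obtain ⟨b, rfl⟩ : ∃ b', b = b' + 1 := ⟨b - 1, by omega⟩
      obtain ⟨m, rfl⟩ : ∃ m', m = m' + 1 := ⟨m - 1, by omega⟩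
      simp only [Nat.add_sub_cancel]
      ring
    refine not_superLineComplete_of_separated hE hF (fun e he f hf ⟨v, hve, hvf⟩ => ?_) hr
      (by omega) (by omega) hG
    have := hEv e he v hve
    have := hFv f hf v hvf
    omega
  · by_contra! hsep
    have := two_mul_card_add_le_of_separated hm hmn hA hB (hAr.trans hBr.symm) hne hsep
    omega

end Grid

theorem lc_grid_even_even_le_general (n m : ℕ) (hm : 2 ≤ m)
    (hne : Even n) (hme : Even m) (hmn : m ≤ n) :
    lcIs (gridGraph n m) (m * n + 1 - (m + n) / 2 - m / 2) := by
  have hmn' : m + n ≤ m * n := by nlinarith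
  obtain ⟨a, ha⟩ := hme
  obtain ⟨b, hb⟩ := hne
  have hlc := fun r (hr : 0 < r) => superLineComplete_gridGraph_iff hm hmn ⟨b, hb⟩ hr
  refine ⟨⟨by omega, (hlc _ (by omega)).2 (by omega)⟩, fun r ⟨hr, hG⟩ => ?_⟩
  have := (hlc r hr).1 hG
  omega

theorem lc_grid_even_even_le (n m : ℕ) (hn : 2 ≤ n) (hm : 2 ≤ m)
    (hne : Even n) (hme : Even m) (hmn : m ≤ n) :
    lcIs (gridGraph n m) (m * n + 1 - (m + n) / 2 - m / 2) :=
  lc_grid_even_even_le_general n m hm hne hme hmn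
end

section
/- Let n be even, n ≥ 2, and m ≥ 1. The grid graph P_n × P_m contains two vertex-disjoint edge sets C and D, each of size mn − m − n/2, such that no edge of C shares a vertex with any edge of D. Consequently the super line graph L_r(P_n × P_m) is not complete for any r ≤ mn − m − n/2. -/
open SimpleGraph

/-!
Split the `n = 2a` rows of the grid into the top `a` rows and the bottom `a` rows. The grid
edges inside each half form a copy of `P_a × P_m`, which has `a(m-1) + (a-1)m = mn - m - n/2`
edges, and the two halves share no vertex. Any `r`-subsets of these two edge sets are then
distinct, non-adjacent vertices of `L_r`.
-/

open Finset

theorem shareVertex_self {V : Type*} (e : Sym2 V) : shareVertex e e :=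
  ⟨e.out.1, e.out_fst_mem, e.out_fst_mem⟩

theorem not_superLineComplete_of_separated_s13 {V : Type*} {G : SimpleGraph V}
    {C D : Finset (Sym2 V)} (hC : ↑C ⊆ G.edgeSet) (hD : ↑D ⊆ G.edgeSet)
    (hCD : ∀ c ∈ C, ∀ d ∈ D, ¬ shareVertex c d) {r : ℕ} (hr : 0 < r) (hrC : r ≤ #C)
    (hrD : r ≤ #D) : ¬ SuperLineComplete G r := by
  intro hG
  obtain ⟨A, hAC, hA⟩ := exists_subset_card_eq hrC
  obtain ⟨B, hBD, hB⟩ := exists_subset_card_eq hrD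
  have hAB : A ≠ B := by
    rintro rfl
    obtain ⟨e, he⟩ := card_pos.1 (hA ▸ hr)
    exact hCD e (hAC he) e (hBD he) (shareVertex_self e)
  obtain ⟨c, hc, d, hd, -, hcd⟩ :=
    hG A B ((coe_subset.2 hAC).trans hC) ((coe_subset.2 hBD).trans hD) hA hB hAB
  exact hCD c (hAC hc) d (hBD hd) hcd

namespace SimpleGraph

theorem card_edgeFinset_boxProd {α β : Type*} [Fintype α] [Fintype β]
    (G : SimpleGraph α) (H : SimpleGraph β) [DecidableRel G.Adj] [DecidableRel H.Adj]
    [DecidableRel (G □ H).Adj] :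
    #(G □ H).edgeFinset = Fintype.card α * #H.edgeFinset + #G.edgeFinset * Fintype.card β := by
  suffices 2 * #(G □ H).edgeFinset
      = 2 * (Fintype.card α * #H.edgeFinset + #G.edgeFinset * Fintype.card β) by omega
  calc 2 * #(G □ H).edgeFinset = ∑ x : α × β, (G.degree x.1 + H.degree x.2) := by
        rw [← sum_degrees_eq_twice_card_edges]
        exact sum_congr rfl fun x _ => by convert degree_boxProd x
    _ = ∑ a, ∑ b, (G.degree a + H.degree b) :=
      Fintype.sum_prod_type' fun a b => G.degree a + H.degree b
    _ = _ := by
      simp only [sum_add_distrib, sum_const, card_univ, smul_eq_mul, ← mul_sum,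
        sum_degrees_eq_twice_card_edges]
      ring

theorem card_edgeFinset_pathGraph (n : ℕ) [DecidableRel (pathGraph n).Adj] :
    #(pathGraph n).edgeFinset = n - 1 := by
  obtain _ | n := n
  · exact card_eq_zero.2 (Subsingleton.elim _ _)
  let step (i : Fin n) : Sym2 (Fin (n + 1)) := s(i.castSucc, i.succ)
  have step_injective : step.Injective := fun i j h => by
    simp only [step, Sym2.eq_iff, Fin.ext_iff, Fin.val_castSucc, Fin.val_succ] at h
    omega
  have : (pathGraph (n + 1)).edgeFinset = univ.image step := by
    ext e
    induction e using Sym2.ind with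
    | h u v =>
      simp only [mem_edgeFinset, mem_edgeSet, pathGraph_adj, mem_image, mem_univ, true_and, step,
        Sym2.eq_iff, Fin.ext_iff, Fin.val_castSucc, Fin.val_succ]
      constructor
      · rintro (h | h)
        · exact ⟨⟨u, by omega⟩, Or.inl ⟨rfl, h⟩⟩
        · exact ⟨⟨v, by omega⟩, Or.inr ⟨rfl, h⟩⟩
      · rintro ⟨i, ⟨h1, h2⟩ | ⟨h1, h2⟩⟩ <;> omega
  rw [this, card_image_of_injective _ step_injective, card_univ, Fintype.card_fin,
    Nat.add_sub_cancel]

theorem mem_range_of_mem_edgeSet_map {V W : Type*} {f : V ↪ W} {G : SimpleGraph V}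
    {e : Sym2 W} (he : e ∈ (G.map f).edgeSet) {w : W} (hw : w ∈ e) : w ∈ Set.range f := by
  rw [edgeSet_map] at he
  obtain ⟨e, -, rfl⟩ := he
  obtain ⟨v, -, rfl⟩ := Sym2.mem_map.1 hw
  exact ⟨v, rfl⟩

theorem not_shareVertex_of_disjoint_range {V V' W : Type*} {f : V ↪ W} {g : V' ↪ W}
    (hfg : Disjoint (Set.range f) (Set.range g)) {G : SimpleGraph V} {H : SimpleGraph V'}
    {c d : Sym2 W} (hc : c ∈ (G.map f).edgeSet) (hd : d ∈ (H.map g).edgeSet) :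
    ¬ shareVertex c d := fun ⟨_, hwc, hwd⟩ =>
  Set.disjoint_left.1 hfg (mem_range_of_mem_edgeSet_map hc hwc)
    (mem_range_of_mem_edgeSet_map hd hwd)

end SimpleGraph

open SimpleGraph

theorem card_edgeFinset_gridGraph (a m : ℕ) [DecidableRel (gridGraph a m).Adj] :
    #(gridGraph a m).edgeFinset = a * (m - 1) + (a - 1) * m := by
  classical
  have := card_edgeFinset_boxProd (pathGraph a) (pathGraph m)
  rw [card_edgeFinset_pathGraph, card_edgeFinset_pathGraph, Fintype.card_fin,
    Fintype.card_fin] at this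
  convert this using 3
  rfl

theorem gridGraph_map_le {a n : ℕ} (m : ℕ) (f : Fin a ↪ Fin n)
    (hf : ∀ i j : Fin a, i.val + 1 = j.val → (f i).val + 1 = (f j).val) :
    (gridGraph a m).map (f.prodMap (.refl _)) ≤ gridGraph n m := by
  rw [map_le_iff_le_comap]
  rintro ⟨i, j⟩ ⟨i', j'⟩ h
  simp only [gridGraph, comap_adj, Function.Embedding.coe_prodMap, Prod.map_apply,
    Function.Embedding.refl_apply, boxProd_adj, pathGraph_adj] at h ⊢
  rcases h with ⟨hi | hi, rfl⟩ | ⟨hj, rfl⟩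
  · exact Or.inl ⟨Or.inl (hf _ _ hi), rfl⟩
  · exact Or.inl ⟨Or.inr (hf _ _ hi), rfl⟩
  · exact Or.inr ⟨hj, rfl⟩

theorem disjoint_range_castAdd_prodMap_natAdd_prodMap (a m : ℕ) :
    Disjoint (Set.range ((Fin.castAddEmb (n := a) a).prodMap (.refl (Fin m))))
      (Set.range ((Fin.natAddEmb a (m := a)).prodMap (.refl (Fin m)))) := by
  rw [Set.disjoint_left]
  rintro _ ⟨⟨i, j⟩, rfl⟩ ⟨⟨i', j'⟩, h⟩
  simp only [Function.Embedding.coe_prodMap, Prod.map_apply, Fin.natAddEmb_apply,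
    Fin.coe_castAddEmb, Prod.ext_iff, Fin.ext_iff, Fin.val_natAdd, Fin.val_castAdd] at h
  omega

theorem mul_sub_one_add_sub_one_mul (a m : ℕ) :
    a * (m - 1) + (a - 1) * m = m * (a + a) - m - (a + a) / 2 := by
  obtain _ | a := a
  · simp
  obtain _ | m := m
  · simp
  have h₁ : (a + 1) * (m + 1 - 1) + (a + 1 - 1) * (m + 1) = 2 * a * m + a + m := by
    simp only [Nat.add_sub_cancel]
    ring
  have h₂ : (m + 1) * (a + 1 + (a + 1)) = 2 * a * m + 2 * a + 2 * m + 2 := by ring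
  omega

theorem grid_even_not_complete_general (n m : ℕ) (hne : Even n) :
    (∃ C D : Finset (Sym2 (Fin n × Fin m)),
      ↑C ⊆ (gridGraph n m).edgeSet ∧ ↑D ⊆ (gridGraph n m).edgeSet ∧
      C.card = m * n - m - n / 2 ∧ D.card = m * n - m - n / 2 ∧
      ∀ c ∈ C, ∀ d ∈ D, ¬ shareVertex c d) ∧
    ∀ r, 0 < r → r ≤ m * n - m - n / 2 → ¬ SuperLineComplete (gridGraph n m) r := by
  classical
  obtain ⟨a, rfl⟩ := hne
  let C := ((gridGraph a m).map ((Fin.castAddEmb a).prodMap (.refl _))).edgeFinset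
  let D := ((gridGraph a m).map ((Fin.natAddEmb a).prodMap (.refl _))).edgeFinset
  have hC : ↑C ⊆ (gridGraph (a + a) m).edgeSet := by
    rw [coe_edgeFinset]
    exact edgeSet_mono (gridGraph_map_le m _ fun _ _ h => h)
  have hD : ↑D ⊆ (gridGraph (a + a) m).edgeSet := by
    rw [coe_edgeFinset]
    exact edgeSet_mono (gridGraph_map_le m _ fun _ _ h => by
      simp only [Fin.natAddEmb_apply, Fin.val_natAdd]; omega)
  have hCD : ∀ c ∈ C, ∀ d ∈ D, ¬ shareVertex c d := fun c hc d hd =>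
    not_shareVertex_of_disjoint_range (disjoint_range_castAdd_prodMap_natAdd_prodMap a m)
      (mem_edgeFinset.1 hc) (mem_edgeFinset.1 hd)
  have hcard (f : Fin a × Fin m ↪ Fin (a + a) × Fin m) :
      #((gridGraph a m).map f).edgeFinset = m * (a + a) - m - (a + a) / 2 := by
    rw [card_edgeFinset_map, card_edgeFinset_gridGraph, mul_sub_one_add_sub_one_mul]
  exact ⟨⟨C, D, hC, hD, hcard _, hcard _, hCD⟩, fun r hr hle =>
    not_superLineComplete_of_separated_s13 hC hD hCD hr (hcard _ ▸ hle) (hcard _ ▸ hle)⟩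

theorem grid_even_not_complete (n m : ℕ) (hn : 2 ≤ n) (hne : Even n)
    (hm : 1 ≤ m) :
    (∃ C D : Finset (Sym2 (Fin n × Fin m)),
      ↑C ⊆ (gridGraph n m).edgeSet ∧ ↑D ⊆ (gridGraph n m).edgeSet ∧
      C.card = m * n - m - n / 2 ∧ D.card = m * n - m - n / 2 ∧
      ∀ c ∈ C, ∀ d ∈ D, ¬ shareVertex c d) ∧
    ∀ r, 0 < r → r ≤ m * n - m - n / 2 → ¬ SuperLineComplete (gridGraph n m) r :=
  grid_even_not_complete_general n m hne
end

section
/- Let n, m be odd, n, m ≥ 3. The grid graph P_n × P_m contains two edge sets C and D, each of size (2mn − m − n − (m+3))/2 = mn − m − (n+3)/2, such that no edge of C shares a vertex with any edge of D. Hence L_r(P_n × P_m) is not complete for r = mn − m − (n+3)/2. -/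
/-! Write n = 2p + 3 and m = 2q + 3. The set S of vertices strictly below the middle row, together
with the first q + 1 vertices of the middle row, spans exactly mn − m − (n + 3)/2 grid edges
(counted as vertical plus horizontal edges). The half-turn of the grid is an automorphism that maps
S into its complement (only the centre is fixed, and it lies outside S), so it carries these edges
to an equally large edge set sharing no vertex with them. Two distinct such r-sets are
non-adjacent in L_r. -/

open SimpleGraph

open Fin.NatCast

namespace SimpleGraph

variable {V : Type*} {G : SimpleGraph V}

lemma shareVertex_self (e : Sym2 V) : shareVertex e e :=
  e.inductionOn fun a _ => ⟨a, Sym2.mem_mk_left _ _, Sym2.mem_mk_left _ _⟩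

theorem not_superLineComplete_of_vertexDisjoint {r : ℕ} (hr : 0 < r)
    {C D : Finset (Sym2 V)} (hCG : ↑C ⊆ G.edgeSet) (hDG : ↑D ⊆ G.edgeSet)
    (hCr : C.card = r) (hDr : D.card = r) (hCD : ∀ c ∈ C, ∀ d ∈ D, ¬ shareVertex c d) :
    ¬ SuperLineComplete G r := by
  intro hG
  have hne : C ≠ D := by
    obtain ⟨e, he⟩ := Finset.card_pos.mp (hCr ▸ hr)
    rintro rfl
    exact hCD e he e he (shareVertex_self e)
  obtain ⟨e, he, f, hf, -, hef⟩ := hG C D hCG hDG hCr hDr hne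
  exact hCD e he f hf hef

theorem exists_vertexDisjoint_image (φ : G ≃g G) {S : Set V} (hS : ∀ v ∈ S, φ v ∉ S)
    {C : Finset (Sym2 V)} (hCG : ↑C ⊆ G.edgeSet) (hCS : ∀ e ∈ C, ∀ v ∈ e, v ∈ S) :
    ∃ D : Finset (Sym2 V), ↑D ⊆ G.edgeSet ∧ D.card = C.card ∧
      ∀ c ∈ C, ∀ d ∈ D, ¬ shareVertex c d := by
  classical
  refine ⟨C.image (Sym2.map φ), ?_,
    Finset.card_image_of_injective _ (Sym2.map.injective φ.injective), ?_⟩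
  · intro d hd
    obtain ⟨c, hc, rfl⟩ := Finset.mem_image.mp hd
    exact φ.map_mem_edgeSet_iff.mpr (hCG hc)
  · rintro c hc d hd ⟨_, hvc, hvd⟩
    obtain ⟨c', hc', rfl⟩ := Finset.mem_image.mp hd
    obtain ⟨u, hu, rfl⟩ := Sym2.mem_map.mp hvd
    exact hS u (hCS c' hc' u hu) (hCS c hc _ hvc)

end SimpleGraph

namespace gridGraph

def rotate (n m : ℕ) : gridGraph n m ≃g gridGraph n m where
  toEquiv := Fin.revPerm.prodCongr Fin.revPerm
  map_rel_iff' := by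
    rintro ⟨a, b⟩ ⟨c, d⟩
    simp only [gridGraph, boxProd_adj, pathGraph_adj, Equiv.prodCongr_apply, Prod.map,
      Fin.revPerm_apply, Fin.rev_inj, Fin.val_rev]
    omega

variable {n m : ℕ} [NeZero n] [NeZero m]

-- The casts reduce modulo `n` and `m`, so the lemmas below keep the coordinates in range.
def point (x : ℕ × ℕ) : Fin n × Fin m := (x.1, x.2)

@[simp] lemma point_fst_val {x : ℕ × ℕ} (h : x.1 < n) :
    ((point x : Fin n × Fin m).1 : ℕ) = x.1 :=
  Fin.val_cast_of_lt h

@[simp] lemma point_snd_val {x : ℕ × ℕ} (h : x.2 < m) :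
    ((point x : Fin n × Fin m).2 : ℕ) = x.2 :=
  Fin.val_cast_of_lt h

def vertEdge (x : ℕ × ℕ) : Sym2 (Fin n × Fin m) := s(point x, point (x.1 + 1, x.2))

def horizEdge (x : ℕ × ℕ) : Sym2 (Fin n × Fin m) := s(point x, point (x.1, x.2 + 1))

-- Distinct grid edges have distinct midpoints.
def doubledMidpoint : Sym2 (Fin n × Fin m) → ℕ × ℕ :=
  Sym2.lift ⟨fun u v => (u.1 + v.1, u.2 + v.2), fun _ _ => by simp [add_comm]⟩

lemma doubledMidpoint_vertEdge {x : ℕ × ℕ} (h₁ : x.1 + 1 < n) (h₂ : x.2 < m) :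
    doubledMidpoint (vertEdge x : Sym2 (Fin n × Fin m)) = (2 * x.1 + 1, 2 * x.2) := by
  have h₀ : x.1 < n := by omega
  simp [doubledMidpoint, vertEdge, h₀, h₁, h₂]
  omega

lemma doubledMidpoint_horizEdge {x : ℕ × ℕ} (h₁ : x.1 < n) (h₂ : x.2 + 1 < m) :
    doubledMidpoint (horizEdge x : Sym2 (Fin n × Fin m)) = (2 * x.1, 2 * x.2 + 1) := by
  have h₀ : x.2 < m := by omega
  simp [doubledMidpoint, horizEdge, h₀, h₁, h₂]
  omega

lemma vertEdge_mem_edgeSet {x : ℕ × ℕ} (h₁ : x.1 + 1 < n) (h₂ : x.2 < m) :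
    vertEdge x ∈ (gridGraph n m).edgeSet := by
  have h₀ : x.1 < n := by omega
  simp [vertEdge, gridGraph, boxProd_adj, pathGraph_adj, Fin.ext_iff, h₀, h₁, h₂]

lemma horizEdge_mem_edgeSet {x : ℕ × ℕ} (h₁ : x.1 < n) (h₂ : x.2 + 1 < m) :
    horizEdge x ∈ (gridGraph n m).edgeSet := by
  have h₀ : x.2 < m := by omega
  simp [horizEdge, gridGraph, boxProd_adj, pathGraph_adj, Fin.ext_iff, h₀, h₁, h₂]

theorem exists_edges_of_indices (R : ℕ × ℕ → Prop) (V H : Finset (ℕ × ℕ))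
    (hV : ∀ x ∈ V, x.1 + 1 < n ∧ x.2 < m ∧ R x ∧ R (x.1 + 1, x.2))
    (hH : ∀ x ∈ H, x.1 < n ∧ x.2 + 1 < m ∧ R x ∧ R (x.1, x.2 + 1)) :
    ∃ C : Finset (Sym2 (Fin n × Fin m)), ↑C ⊆ (gridGraph n m).edgeSet ∧
      C.card = V.card + H.card ∧ ∀ e ∈ C, ∀ v ∈ e, R (v.1, v.2) := by
  classical
  have hinjV : Set.InjOn (vertEdge : ℕ × ℕ → Sym2 (Fin n × Fin m)) V := by
    intro x hx y hy hxy
    have := congrArg doubledMidpoint hxy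
    rw [doubledMidpoint_vertEdge (hV x hx).1 (hV x hx).2.1,
      doubledMidpoint_vertEdge (hV y hy).1 (hV y hy).2.1, Prod.mk.injEq] at this
    ext <;> omega
  have hinjH : Set.InjOn (horizEdge : ℕ × ℕ → Sym2 (Fin n × Fin m)) H := by
    intro x hx y hy hxy
    have := congrArg doubledMidpoint hxy
    rw [doubledMidpoint_horizEdge (hH x hx).1 (hH x hx).2.1,
      doubledMidpoint_horizEdge (hH y hy).1 (hH y hy).2.1, Prod.mk.injEq] at this
    ext <;> omega
  have hdisj : Disjoint (V.image (vertEdge : ℕ × ℕ → Sym2 (Fin n × Fin m)))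
      (H.image horizEdge) := by
    simp only [Finset.disjoint_left, Finset.mem_image]
    rintro _ ⟨x, hx, rfl⟩ ⟨y, hy, hxy⟩
    have := congrArg doubledMidpoint hxy
    rw [doubledMidpoint_vertEdge (hV x hx).1 (hV x hx).2.1,
      doubledMidpoint_horizEdge (hH y hy).1 (hH y hy).2.1, Prod.mk.injEq] at this
    omega
  refine ⟨V.image vertEdge ∪ H.image horizEdge, ?_, ?_, ?_⟩
  · simp only [Finset.coe_union, Finset.coe_image, Set.union_subset_iff, Set.image_subset_iff]
    exact ⟨fun x hx => vertEdge_mem_edgeSet (hV x hx).1 (hV x hx).2.1,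
      fun x hx => horizEdge_mem_edgeSet (hH x hx).1 (hH x hx).2.1⟩
  · rw [Finset.card_union_of_disjoint hdisj, Finset.card_image_of_injOn hinjV,
      Finset.card_image_of_injOn hinjH]
  · simp only [Finset.mem_union, Finset.mem_image]
    rintro _ (⟨x, hx, rfl⟩ | ⟨x, hx, rfl⟩) v hv
    · obtain ⟨h₁, h₂, hR, hR'⟩ := hV x hx
      have h₀ : x.1 < n := by omega
      rcases Sym2.mem_iff.mp hv with rfl | rfl <;> simpa [h₀, h₁, h₂]
    · obtain ⟨h₁, h₂, hR, hR'⟩ := hH x hx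
      have h₀ : x.2 < m := by omega
      rcases Sym2.mem_iff.mp hv with rfl | rfl <;> simpa [h₀, h₁, h₂]

def lowerHalf (p q : ℕ) : Set (Fin (2 * p + 3) × Fin (2 * q + 3)) :=
  {v | p + 1 < (v.1 : ℕ) ∨ ((v.1 : ℕ) = p + 1 ∧ (v.2 : ℕ) ≤ q)}

lemma rotate_not_mem_lowerHalf (p q : ℕ) :
    ∀ v ∈ lowerHalf p q, rotate (2 * p + 3) (2 * q + 3) v ∉ lowerHalf p q := by
  rintro ⟨a, b⟩ hv
  simp only [lowerHalf, Set.mem_ofPred_eq, rotate, RelIso.coe_fn_mk,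
    Equiv.prodCongr_apply, Prod.map, Fin.revPerm_apply, Fin.val_rev] at hv ⊢
  omega

theorem exists_edges_lowerHalf (p q : ℕ) :
    ∃ C : Finset (Sym2 (Fin (2 * p + 3) × Fin (2 * q + 3))),
      ↑C ⊆ (gridGraph (2 * p + 3) (2 * q + 3)).edgeSet ∧
      C.card = 4 * p * q + 5 * p + 4 * q + 3 ∧
      ∀ e ∈ C, ∀ v ∈ e, v ∈ lowerHalf p q := by
  obtain ⟨C, hCG, hCcard, hCR⟩ := exists_edges_of_indices (n := 2 * p + 3) (m := 2 * q + 3)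
    (fun x => p + 1 < x.1 ∨ (x.1 = p + 1 ∧ x.2 ≤ q))
    (Finset.Ico (p + 2) (2 * p + 2) ×ˢ Finset.range (2 * q + 3) ∪
      {p + 1} ×ˢ Finset.range (q + 1))
    (Finset.Ico (p + 2) (2 * p + 3) ×ˢ Finset.range (2 * q + 2) ∪
      {p + 1} ×ˢ Finset.range q)
    (by intro x hx; simp only [Finset.mem_union, Finset.mem_product, Finset.mem_Ico,
          Finset.mem_range, Finset.mem_singleton] at hx; omega)
    (by intro x hx; simp only [Finset.mem_union, Finset.mem_product, Finset.mem_Ico,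
          Finset.mem_range, Finset.mem_singleton] at hx; omega)
  refine ⟨C, hCG, ?_, hCR⟩
  rw [hCcard, Finset.card_union_of_disjoint, Finset.card_union_of_disjoint]
  · simp only [Finset.card_product, Nat.card_Ico, Finset.card_range, Finset.card_singleton]
    rw [show 2 * p + 2 - (p + 2) = p by omega, show 2 * p + 3 - (p + 2) = p + 1 by omega]
    ring
  all_goals
    simp only [Finset.disjoint_left, Finset.mem_product, Finset.mem_Ico, Finset.mem_range,
      Finset.mem_singleton]
    omega

end gridGraph

theorem grid_odd_odd_not_complete (n m : ℕ) (hn : 3 ≤ n) (hno : Odd n)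
    (hm : 3 ≤ m) (hmo : Odd m) :
    (∃ C D : Finset (Sym2 (Fin n × Fin m)),
      ↑C ⊆ (gridGraph n m).edgeSet ∧ ↑D ⊆ (gridGraph n m).edgeSet ∧
      C.card = m * n - m - (n + 3) / 2 ∧ D.card = m * n - m - (n + 3) / 2 ∧
      ∀ c ∈ C, ∀ d ∈ D, ¬ shareVertex c d) ∧
    ¬ SuperLineComplete (gridGraph n m) (m * n - m - (n + 3) / 2) := by
  obtain ⟨p, rfl⟩ : ∃ p, n = 2 * p + 3 := by
    obtain ⟨k, rfl⟩ := hno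
    exact ⟨k - 1, by omega⟩
  obtain ⟨q, rfl⟩ : ∃ q, m = 2 * q + 3 := by
    obtain ⟨k, rfl⟩ := hmo
    exact ⟨k - 1, by omega⟩
  have hr : (2 * q + 3) * (2 * p + 3) - (2 * q + 3) - (2 * p + 3 + 3) / 2 =
      4 * p * q + 5 * p + 4 * q + 3 := by
    rw [show (2 * q + 3) * (2 * p + 3) = 4 * p * q + 6 * p + 6 * q + 9 by ring]
    omega
  rw [hr]
  obtain ⟨C, hCG, hCr, hCS⟩ := gridGraph.exists_edges_lowerHalf p q
  obtain ⟨D, hDG, hDC, hCD⟩ :=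
    exists_vertexDisjoint_image _ (gridGraph.rotate_not_mem_lowerHalf p q) hCG hCS
  exact ⟨⟨C, D, hCG, hDG, hCr, hDC.trans hCr, hCD⟩,
    not_superLineComplete_of_vertexDisjoint (by omega) hCG hDG hCr (hDC.trans hCr) hCD⟩
end

section
/- lc(P_4 × P_6) = 18: the grid graph P_4 × P_6 has two disjoint edge sets of size 17 with no adjacent pair between them (so L_17 is not complete), and any two 18-subsets of its edges contain a pair of edges sharing a vertex (so L_18 is complete). -/
open SimpleGraph

/-!
If two `18`-sets `A ≠ B` of edges had no adjacent pair, the edge sets `A \ B`, `B \ A` and the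
matching `A ∩ B` would live on pairwise disjoint vertex sets, so one of `A \ B`, `B \ A` would
consist of `18 - k` edges spanning at most `12 - k` vertices, where `k = |A ∩ B|`. This contradicts
the isoperimetric bound of the `4 × 6` grid: `s ≤ 12` vertices span at most `s + 5` edges, which is
proved column by column. Conversely the two `4 × 3` halves of the grid have `17` edges each and no
common vertex, so no `r ≤ 17` works.
-/

open Finset

section Separation

variable {V : Type*}

lemma shareVertex_comm {e f : Sym2 V} : shareVertex e f ↔ shareVertex f e := by
  simp only [shareVertex, and_comm]

lemma disjoint_of_forall_not_shareVertex {C D : Finset (Sym2 V)}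
    (h : ∀ c ∈ C, ∀ d ∈ D, ¬ shareVertex c d) : Disjoint C D :=
  disjoint_left.2 fun e hC hD =>
    h e hC e hD <| e.ind fun a _ => ⟨a, Sym2.mem_mk_left _ _, Sym2.mem_mk_left _ _⟩

lemma not_superLineComplete_of_forall_not_shareVertex {G : SimpleGraph V}
    {C D : Finset (Sym2 V)} (hC : ↑C ⊆ G.edgeSet) (hD : ↑D ⊆ G.edgeSet)
    (hCD : ∀ c ∈ C, ∀ d ∈ D, ¬ shareVertex c d) {r : ℕ} (hr : 0 < r) (hrC : r ≤ #C)
    (hrD : r ≤ #D) : ¬ SuperLineComplete G r := by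
  intro hcomplete
  obtain ⟨A, hAC, hA⟩ := exists_subset_card_eq hrC
  obtain ⟨B, hBD, hB⟩ := exists_subset_card_eq hrD
  have hAB : A ≠ B := by
    rintro rfl
    obtain ⟨e, he⟩ := card_pos.1 (hA ▸ hr)
    exact disjoint_left.1 (disjoint_of_forall_not_shareVertex hCD) (hAC he) (hBD he)
  obtain ⟨e, he, f, hf, -, hef⟩ := hcomplete A B ((coe_subset.2 hAC).trans hC)
    ((coe_subset.2 hBD).trans hD) hA hB hAB
  exact hCD e (hAC he) f (hBD hf) hef

variable [DecidableEq V]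

def endpoints (S : Finset (Sym2 V)) : Finset V := S.biUnion Sym2.toFinset

lemma mem_endpoints {S : Finset (Sym2 V)} {v : V} : v ∈ endpoints S ↔ ∃ e ∈ S, v ∈ e := by
  simp [endpoints]

lemma disjoint_endpoints {S T : Finset (Sym2 V)} (h : ∀ e ∈ S, ∀ f ∈ T, ¬ shareVertex e f) :
    Disjoint (endpoints S) (endpoints T) := by
  refine disjoint_left.2 fun v hS hT => ?_
  obtain ⟨e, he, hve⟩ := mem_endpoints.1 hS
  obtain ⟨f, hf, hvf⟩ := mem_endpoints.1 hT
  exact h e he f hf ⟨v, hve, hvf⟩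

lemma card_endpoints_eq_two_mul {S : Finset (Sym2 V)} (hdiag : ∀ e ∈ S, ¬ e.IsDiag)
    (hS : ∀ e ∈ S, ∀ f ∈ S, e ≠ f → ¬ shareVertex e f) : #(endpoints S) = 2 * #S := by
  rw [endpoints, card_biUnion,
    sum_congr rfl fun e he => Sym2.card_toFinset_of_not_isDiag e (hdiag e he), sum_const,
    smul_eq_mul, mul_comm]
  intro e he f hf hef
  exact disjoint_left.2 fun v hve hvf =>
    hS e he f hf hef ⟨v, Sym2.mem_toFinset.1 hve, Sym2.mem_toFinset.1 hvf⟩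

theorem superLineComplete_of_card_le_card_endpoints_add [Fintype V] {G : SimpleGraph V}
    {c r : ℕ} (hiso : ∀ S : Finset (Sym2 V), ↑S ⊆ G.edgeSet →
      2 * #(endpoints S) ≤ Fintype.card V → #S ≤ #(endpoints S) + c)
    (hr : Fintype.card V + 2 * c < 2 * r) : SuperLineComplete G r := by
  intro A B hA hB hAr hBr _
  by_contra! hsep
  have hAB : ∀ e ∈ A \ B, ∀ f ∈ B, ¬ shareVertex e f := fun e he f hf =>
    hsep e (mem_sdiff.1 he).1 f hf fun hef => (mem_sdiff.1 he).2 (hef ▸ hf)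
  have hBA : ∀ e ∈ B \ A, ∀ f ∈ A, ¬ shareVertex e f := fun e he f hf hef =>
    hsep f hf e (mem_sdiff.1 he).1 (fun hfe => (mem_sdiff.1 he).2 (hfe ▸ hf))
      (shareVertex_comm.1 hef)
  have hcard : #(endpoints (A \ B)) + #(endpoints (B \ A)) + #(endpoints (A ∩ B)) ≤
      Fintype.card V := by
    rw [← card_union_of_disjoint (disjoint_endpoints fun e he f hf => hAB e he f (sdiff_subset hf)),
      ← card_union_of_disjoint (disjoint_union_left.2
        ⟨disjoint_endpoints fun e he f hf => hAB e he f (inter_subset_right hf),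
          disjoint_endpoints fun e he f hf => hBA e he f (inter_subset_left hf)⟩)]
    exact card_le_univ _
  have hmatching : #(endpoints (A ∩ B)) = 2 * #(A ∩ B) :=
    card_endpoints_eq_two_mul
      (fun e he => G.not_isDiag_of_mem_edgeSet (hA (inter_subset_left he)))
      fun e he f hf => hsep e (inter_subset_left he) f (inter_subset_right hf)
  have hAiso := hiso (A \ B) ((coe_subset.2 sdiff_subset).trans hA)
  have hBiso := hiso (B \ A) ((coe_subset.2 sdiff_subset).trans hB)
  have hAsplit := card_sdiff_add_card_inter A B
  have hBsplit := card_sdiff_add_card_inter B A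
  rw [inter_comm] at hBsplit
  omega

end Separation

section Grid

lemma inf_covBy_sup_of_mem_edgeSet_hasse {α : Type*} [Lattice α] {e : Sym2 α}
    (he : e ∈ (hasse α).edgeSet) : e.inf ⋖ e.sup ∧ e = s(e.inf, e.sup) := by
  induction e using Sym2.ind with
  | h a b =>
    rcases hasse_adj.1 he with h | h
    · simp [h, h.le]
    · simp [h, h.le, Sym2.eq_swap]

variable {n m : ℕ}

lemma gridGraph_eq_hasse : gridGraph n m = hasse (Fin n × Fin m) := (hasse_prod ..).symm

lemma Fin.prod_covBy_iff {a b : Fin n × Fin m} :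
    a ⋖ b ↔ ((a.1 : ℕ) + 1 = b.1 ∧ a.2 = b.2) ∨ ((a.2 : ℕ) + 1 = b.2 ∧ a.1 = b.1) := by
  simp [Prod.covBy_iff]

instance : DecidableRel (gridGraph n m).Adj := fun a b =>
  decidable_of_iff
    ((((a.1 : ℕ) + 1 = b.1 ∧ a.2 = b.2) ∨ ((a.2 : ℕ) + 1 = b.2 ∧ a.1 = b.1)) ∨
      (((b.1 : ℕ) + 1 = a.1 ∧ b.2 = a.2) ∨ ((b.2 : ℕ) + 1 = a.2 ∧ b.1 = a.1)))
    (by rw [gridGraph_eq_hasse, hasse_adj, Fin.prod_covBy_iff, Fin.prod_covBy_iff])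

lemma inf_sup_of_mem_edgeSet_gridGraph {e : Sym2 (Fin n × Fin m)}
    (he : e ∈ (gridGraph n m).edgeSet) :
    (((e.inf.1 : ℕ) + 1 = e.sup.1 ∧ e.inf.2 = e.sup.2) ∨
      ((e.inf.2 : ℕ) + 1 = e.sup.2 ∧ e.inf.1 = e.sup.1)) ∧ e = s(e.inf, e.sup) := by
  rw [gridGraph_eq_hasse] at he
  obtain ⟨hcov, he⟩ := inf_covBy_sup_of_mem_edgeSet_hasse he
  exact ⟨Fin.prod_covBy_iff.1 hcov, he⟩

lemma eq_of_inf_eq_of_mem_edgeSet_gridGraph {e f : Sym2 (Fin n × Fin m)}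
    (he : e ∈ (gridGraph n m).edgeSet) (hf : f ∈ (gridGraph n m).edgeSet) (h : e.inf = f.inf)
    (hdir : e.sup.2 = e.inf.2 ↔ f.sup.2 = f.inf.2) : e = f := by
  obtain ⟨hcov_e, he⟩ := inf_sup_of_mem_edgeSet_gridGraph he
  obtain ⟨hcov_f, hf⟩ := inf_sup_of_mem_edgeSet_gridGraph hf
  have hsup : e.sup = f.sup := by
    simp only [Prod.ext_iff, Fin.ext_iff] at h hdir hcov_e hcov_f ⊢
    omega
  rw [he, hf, h, hsup]

lemma eq_of_sup_eq_of_mem_edgeSet_gridGraph {e f : Sym2 (Fin n × Fin m)}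
    (he : e ∈ (gridGraph n m).edgeSet) (hf : f ∈ (gridGraph n m).edgeSet) (h : e.sup = f.sup)
    (hdir : e.sup.2 = e.inf.2 ↔ f.sup.2 = f.inf.2) : e = f := by
  obtain ⟨hcov_e, he⟩ := inf_sup_of_mem_edgeSet_gridGraph he
  obtain ⟨hcov_f, hf⟩ := inf_sup_of_mem_edgeSet_gridGraph hf
  have hinf : e.inf = f.inf := by
    simp only [Prod.ext_iff, Fin.ext_iff] at h hdir hcov_e hcov_f ⊢
    omega
  rw [he, hf, h, hinf]

lemma inf_sup_mem_endpoints {S : Finset (Sym2 (Fin n × Fin m))} {e : Sym2 (Fin n × Fin m)}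
    (heS : e ∈ S) (he : e ∈ (gridGraph n m).edgeSet) :
    e.inf ∈ endpoints S ∧ e.sup ∈ endpoints S := by
  have hmk := (inf_sup_of_mem_edgeSet_gridGraph he).2
  have hinf := Sym2.mem_mk_left e.inf e.sup
  have hsup := Sym2.mem_mk_right e.inf e.sup
  rw [← hmk] at hinf hsup
  exact ⟨mem_endpoints.2 ⟨e, heS, hinf⟩, mem_endpoints.2 ⟨e, heS, hsup⟩⟩

def column (W : Finset (Fin n × Fin m)) (j : ℕ) : Finset (Fin n × Fin m) :=
  {v ∈ W | (v.2 : ℕ) = j}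

lemma card_column_le (W : Finset (Fin n × Fin m)) (j : ℕ) : #(column W j) ≤ n := by
  refine (card_le_card_of_injOn Prod.fst (fun _ _ => mem_coe.2 (mem_univ _)) ?_).trans_eq
    (card_fin n)
  intro v hv w hw hvw
  simp only [column, mem_coe, mem_filter] at hv hw
  exact Prod.ext hvw (Fin.ext (hv.2.trans hw.2.symm))

lemma sum_card_column (W : Finset (Fin n × Fin m)) : ∑ j ∈ range m, #(column W j) = #W :=
  (card_eq_sum_card_fiberwise fun v _ => mem_range.2 v.2.isLt).symm

lemma column_eq_empty_of_le (W : Finset (Fin n × Fin m)) {j : ℕ} (hj : m ≤ j) :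
    column W j = ∅ :=
  filter_eq_empty_iff.2 fun v _ => (v.2.isLt.trans_le hj).ne

/- An edge of the grid is indexed by the column of its lower endpoint `e.inf` and by whether its
upper endpoint `e.sup` lies in the same column. -/
def verticalEdgesAt (S : Finset (Sym2 (Fin n × Fin m))) (j : ℕ) :
    Finset (Sym2 (Fin n × Fin m)) :=
  {e ∈ S | (e.inf.2 : ℕ) = j ∧ e.sup.2 = e.inf.2}

def horizontalEdgesAt (S : Finset (Sym2 (Fin n × Fin m))) (j : ℕ) :
    Finset (Sym2 (Fin n × Fin m)) :=
  {e ∈ S | (e.inf.2 : ℕ) = j ∧ e.sup.2 ≠ e.inf.2}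

lemma card_eq_sum_card_verticalEdgesAt_add_card_horizontalEdgesAt
    (S : Finset (Sym2 (Fin n × Fin m))) :
    #S = ∑ j ∈ range m, (#(verticalEdgesAt S j) + #(horizontalEdgesAt S j)) := by
  rw [card_eq_sum_card_fiberwise (f := fun e => (e.inf.2 : ℕ))
    fun e _ => mem_range.2 e.inf.2.isLt]
  refine sum_congr rfl fun j _ => ?_
  rw [verticalEdgesAt, horizontalEdgesAt, ← filter_filter, ← filter_filter,
    card_filter_add_card_filter_not]

variable {S : Finset (Sym2 (Fin n × Fin m))}

lemma mem_column_of_mem_verticalEdgesAt (hS : ↑S ⊆ (gridGraph n m).edgeSet) {j : ℕ}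
    {e : Sym2 (Fin n × Fin m)} (he : e ∈ verticalEdgesAt S j) :
    e.inf ∈ column (endpoints S) j ∧ e.sup ∈ column (endpoints S) j ∧
      (e.inf.1 : ℕ) < e.sup.1 := by
  obtain ⟨heS, hj, hdir⟩ := mem_filter.1 he
  obtain ⟨hinf, hsup⟩ := inf_sup_mem_endpoints heS (hS heS)
  have hcov := (inf_sup_of_mem_edgeSet_gridGraph (hS heS)).1
  refine ⟨mem_filter.2 ⟨hinf, hj⟩, mem_filter.2 ⟨hsup, hdir ▸ hj⟩, ?_⟩
  simp only [hdir, Fin.ext_iff] at hcov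
  omega

lemma mem_column_of_mem_horizontalEdgesAt (hS : ↑S ⊆ (gridGraph n m).edgeSet) {j : ℕ}
    {e : Sym2 (Fin n × Fin m)} (he : e ∈ horizontalEdgesAt S j) :
    e.inf ∈ column (endpoints S) j ∧ e.sup ∈ column (endpoints S) (j + 1) := by
  obtain ⟨heS, hj, hdir⟩ := mem_filter.1 he
  obtain ⟨hinf, hsup⟩ := inf_sup_mem_endpoints heS (hS heS)
  have hcov := (inf_sup_of_mem_edgeSet_gridGraph (hS heS)).1
  refine ⟨mem_filter.2 ⟨hinf, hj⟩, mem_filter.2 ⟨hsup, ?_⟩⟩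
  simp only [Fin.ext_iff] at hcov hdir
  omega

/- The lower endpoints of the vertical edges miss the highest vertex of the column. -/
lemma card_verticalEdgesAt_lt (hS : ↑S ⊆ (gridGraph n m).edgeSet) {j : ℕ}
    (hne : (verticalEdgesAt S j).Nonempty) :
    #(verticalEdgesAt S j) < #(column (endpoints S) j) := by
  obtain ⟨e₀, he₀⟩ := hne
  obtain ⟨top, htop, htop_max⟩ :=
    (column (endpoints S) j).exists_max_image (fun v => (v.1 : ℕ))
      ⟨_, (mem_column_of_mem_verticalEdgesAt hS he₀).1⟩
  calc #(verticalEdgesAt S j) ≤ #((column (endpoints S) j).erase top) := by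
        refine card_le_card_of_injOn Sym2.inf (fun e he => ?_) fun e he f hf hef => ?_
        · obtain ⟨hinf, hsup, hlt⟩ := mem_column_of_mem_verticalEdgesAt hS he
          refine mem_erase.2 ⟨?_, hinf⟩
          rintro rfl
          exact (htop_max _ hsup).not_gt hlt
        · exact eq_of_inf_eq_of_mem_edgeSet_gridGraph (hS (mem_filter.1 he).1)
            (hS (mem_filter.1 hf).1) hef (iff_of_true (mem_filter.1 he).2.2 (mem_filter.1 hf).2.2)
    _ < #(column (endpoints S) j) := card_erase_lt_of_mem htop

lemma card_horizontalEdgesAt_le_left (hS : ↑S ⊆ (gridGraph n m).edgeSet) (j : ℕ) :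
    #(horizontalEdgesAt S j) ≤ #(column (endpoints S) j) :=
  card_le_card_of_injOn Sym2.inf (fun _ he => (mem_column_of_mem_horizontalEdgesAt hS he).1)
    fun _ he _ hf hef => eq_of_inf_eq_of_mem_edgeSet_gridGraph (hS (mem_filter.1 he).1)
      (hS (mem_filter.1 hf).1) hef (iff_of_false (mem_filter.1 he).2.2 (mem_filter.1 hf).2.2)

lemma card_horizontalEdgesAt_le_right (hS : ↑S ⊆ (gridGraph n m).edgeSet) (j : ℕ) :
    #(horizontalEdgesAt S j) ≤ #(column (endpoints S) (j + 1)) :=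
  card_le_card_of_injOn Sym2.sup (fun _ he => (mem_column_of_mem_horizontalEdgesAt hS he).2)
    fun _ he _ hf hef => eq_of_sup_eq_of_mem_edgeSet_gridGraph (hS (mem_filter.1 he).1)
      (hS (mem_filter.1 hf).1) hef (iff_of_false (mem_filter.1 he).2.2 (mem_filter.1 hf).2.2)

/- With `wⱼ` vertices in column `j`: at most `wⱼ - 1` vertical edges in a nonempty column and at
most `min wⱼ wⱼ₊₁` horizontal ones leaving it; under `wⱼ ≤ 4` and `∑ wⱼ ≤ 12` the surplus over
`∑ wⱼ` is at most five, attained by a `4 × 3` block. -/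
theorem card_le_card_endpoints_add_five {S : Finset (Sym2 (Fin 4 × Fin 6))}
    (hS : ↑S ⊆ (gridGraph 4 6).edgeSet) (hW : #(endpoints S) ≤ 12) :
    #S ≤ #(endpoints S) + 5 := by
  have hcolumn (j : ℕ) :
      (#(verticalEdgesAt S j) = 0 ∨ #(verticalEdgesAt S j) < #(column (endpoints S) j)) ∧
      #(horizontalEdgesAt S j) ≤ #(column (endpoints S) j) ∧
      #(horizontalEdgesAt S j) ≤ #(column (endpoints S) (j + 1)) ∧
      #(column (endpoints S) j) ≤ 4 :=
    ⟨(eq_empty_or_nonempty _).imp card_eq_zero.2 (card_verticalEdgesAt_lt hS),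
      card_horizontalEdgesAt_le_left hS j, card_horizontalEdgesAt_le_right hS j,
      card_column_le (endpoints S) j⟩
  have hlast : #(column (endpoints S) 6) = 0 := by
    rw [column_eq_empty_of_le _ le_rfl, card_empty]
  rw [card_eq_sum_card_verticalEdgesAt_add_card_horizontalEdgesAt S,
    ← sum_card_column (endpoints S)]
  rw [← sum_card_column (endpoints S)] at hW
  simp only [sum_range_succ, sum_range_zero, zero_add] at hW ⊢
  have h0 := hcolumn 0; have h1 := hcolumn 1; have h2 := hcolumn 2
  have h3 := hcolumn 3; have h4 := hcolumn 4; have h5 := hcolumn 5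
  simp only [Nat.reduceAdd] at h0 h1 h2 h3 h4 h5
  omega

theorem superLineComplete_gridGraph_four_six_eighteen : SuperLineComplete (gridGraph 4 6) 18 :=
  superLineComplete_of_card_le_card_endpoints_add (c := 5)
    (fun _ hS hW => card_le_card_endpoints_add_five hS (by simp at hW; omega)) (by simp)

def leftHalf : Finset (Sym2 (Fin 4 × Fin 6)) :=
  {e ∈ (gridGraph 4 6).edgeFinset | ∀ v ∈ e, (v.2 : ℕ) < 3}

def rightHalf : Finset (Sym2 (Fin 4 × Fin 6)) :=
  {e ∈ (gridGraph 4 6).edgeFinset | ∀ v ∈ e, 3 ≤ (v.2 : ℕ)}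

lemma card_leftHalf : #leftHalf = 17 := by decide

lemma card_rightHalf : #rightHalf = 17 := by decide

lemma leftHalf_subset_edgeSet : ↑leftHalf ⊆ (gridGraph 4 6).edgeSet :=
  fun _ he => mem_edgeFinset.1 (mem_filter.1 he).1

lemma rightHalf_subset_edgeSet : ↑rightHalf ⊆ (gridGraph 4 6).edgeSet :=
  fun _ he => mem_edgeFinset.1 (mem_filter.1 he).1

lemma not_shareVertex_leftHalf_rightHalf :
    ∀ c ∈ leftHalf, ∀ d ∈ rightHalf, ¬ shareVertex c d :=
  fun _ hc _ hd ⟨v, hvc, hvd⟩ => ((mem_filter.1 hc).2 v hvc).not_ge ((mem_filter.1 hd).2 v hvd)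

end Grid

theorem lc_grid_four_six :
    (∃ C D : Finset (Sym2 (Fin 4 × Fin 6)),
      ↑C ⊆ (gridGraph 4 6).edgeSet ∧ ↑D ⊆ (gridGraph 4 6).edgeSet ∧
      Disjoint C D ∧ C.card = 17 ∧ D.card = 17 ∧
      ∀ c ∈ C, ∀ d ∈ D, ¬ shareVertex c d) ∧
    SuperLineComplete (gridGraph 4 6) 18 ∧
    lcIs (gridGraph 4 6) 18 := by
  have hcomplete := superLineComplete_gridGraph_four_six_eighteen
  refine ⟨⟨leftHalf, rightHalf, leftHalf_subset_edgeSet, rightHalf_subset_edgeSet,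
    disjoint_of_forall_not_shareVertex not_shareVertex_leftHalf_rightHalf, card_leftHalf,
    card_rightHalf, not_shareVertex_leftHalf_rightHalf⟩, hcomplete, ⟨by norm_num, hcomplete⟩, ?_⟩
  rintro r ⟨hr, hcomplete_r⟩
  by_contra! hr18
  exact not_superLineComplete_of_forall_not_shareVertex leftHalf_subset_edgeSet
    rightHalf_subset_edgeSet not_shareVertex_leftHalf_rightHalf hr
    (by rw [card_leftHalf]; omega) (by rw [card_rightHalf]; omega) hcomplete_r
end

section
/- lc(P_5 × P_7) = 26 for the grid graph P_5 × P_7. -/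
open SimpleGraph

/-!
If two edge sets `A`, `B` are nonadjacent in the super line graph, then `A \ B`, `B \ A` and
`A ∩ B` have pairwise disjoint vertex supports and `A ∩ B` is a matching.
An edge set of a grid whose support has `n` vertices in `a` rows and `b` columns has at most
`(n - a) + (n - b)` edges, since the first vertex of each row (column) is not the far end of a
horizontal (vertical) edge; together with `n ≤ a * b` this gives at most `n + 8` edges when
`n ≤ 17`. In `P₅ × P₇` the supports of `A \ B`, `B \ A` and the `2 |A ∩ B|` vertices of the
matching fit into 35 vertices, so one of `A \ B`, `B \ A` spans at most `17 - |A ∩ B|` vertices,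
has at most `25 - |A ∩ B|` edges, and `A`, `B` cannot both have 26 edges.
For `r ≤ 25`, `r`-subsets of two blocks of 25 edges separated by a single vertex are nonadjacent.
-/

open Finset

section SuperLine

variable {V : Type*}

theorem shareVertex.symm {e f : Sym2 V} : shareVertex e f → shareVertex f e :=
  fun ⟨v, he, hf⟩ ↦ ⟨v, hf, he⟩

theorem not_superLineComplete_of_forall_not_shareVertex_s19 {G : SimpleGraph V}
    {P Q : Finset (Sym2 V)} (hP : ↑P ⊆ G.edgeSet) (hQ : ↑Q ⊆ G.edgeSet)
    (hPQ : ∀ e ∈ P, ∀ f ∈ Q, ¬ shareVertex e f) {r : ℕ} (hr : 0 < r) (hrP : r ≤ #P)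
    (hrQ : r ≤ #Q) : ¬ SuperLineComplete G r := by
  intro hG
  obtain ⟨A, hAP, hA⟩ := exists_subset_card_eq hrP
  obtain ⟨B, hBQ, hB⟩ := exists_subset_card_eq hrQ
  have hAB : A ≠ B := by
    rintro rfl
    obtain ⟨e, he⟩ := card_pos.1 (hA ▸ hr)
    exact hPQ e (hAP he) e (hBQ he) ⟨_, e.out_fst_mem, e.out_fst_mem⟩
  obtain ⟨e, he, f, hf, -, hef⟩ :=
    hG A B (subset_trans (mod_cast hAP) hP) (subset_trans (mod_cast hBQ) hQ) hA hB hAB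
  exact hPQ e (hAP he) f (hBQ hf) hef

variable [DecidableEq V]

theorem disjoint_biUnion_toFinset_of_forall_not_shareVertex {P Q : Finset (Sym2 V)}
    (hPQ : ∀ e ∈ P, ∀ f ∈ Q, ¬ shareVertex e f) :
    Disjoint (P.biUnion Sym2.toFinset) (Q.biUnion Sym2.toFinset) := by
  simp only [Finset.disjoint_left, mem_biUnion, Sym2.mem_toFinset]
  rintro v ⟨e, he, hve⟩ ⟨f, hf, hvf⟩
  exact hPQ e he f hf ⟨v, hve, hvf⟩

theorem card_biUnion_toFinset_of_pairwise_not_shareVertex {G : SimpleGraph V}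
    {C : Finset (Sym2 V)} (hC : ↑C ⊆ G.edgeSet)
    (hCC : ∀ e ∈ C, ∀ f ∈ C, e ≠ f → ¬ shareVertex e f) :
    #(C.biUnion Sym2.toFinset) = 2 * #C := by
  rw [card_biUnion, sum_const_nat fun e he ↦
    Sym2.card_toFinset_of_not_isDiag e (G.not_isDiag_of_mem_edgeSet (hC he)), mul_comm]
  intro e he f hf hef
  exact (disjoint_biUnion_toFinset_of_forall_not_shareVertex (P := {e}) (Q := {f})
    (by simpa using hCC e he f hf hef)).mono (by simp) (by simp)

theorem card_supports_add_two_mul_card_inter_le [Fintype V] {G : SimpleGraph V}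
    {A B : Finset (Sym2 V)} (hA : ↑A ⊆ G.edgeSet)
    (hAB : ∀ e ∈ A, ∀ f ∈ B, e ≠ f → ¬ shareVertex e f) :
    #((A \ B).biUnion Sym2.toFinset) + #((B \ A).biUnion Sym2.toFinset) + 2 * #(A ∩ B)
      ≤ Fintype.card V := by
  have hDE := disjoint_biUnion_toFinset_of_forall_not_shareVertex (P := A \ B) (Q := B \ A)
    fun e he f hf ↦ hAB e (mem_sdiff.1 he).1 f (mem_sdiff.1 hf).1
      fun h ↦ (mem_sdiff.1 he).2 (h ▸ (mem_sdiff.1 hf).1)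
  have hDC := disjoint_biUnion_toFinset_of_forall_not_shareVertex (P := A \ B) (Q := A ∩ B)
    fun e he f hf ↦ hAB e (mem_sdiff.1 he).1 f (mem_inter.1 hf).2
      fun h ↦ (mem_sdiff.1 he).2 (h ▸ (mem_inter.1 hf).2)
  have hEC := disjoint_biUnion_toFinset_of_forall_not_shareVertex (P := B \ A) (Q := A ∩ B)
    fun e he f hf hef ↦ hAB f (mem_inter.1 hf).1 e (mem_sdiff.1 he).1
      (fun h ↦ (mem_sdiff.1 he).2 (h ▸ (mem_inter.1 hf).1)) hef.symm
  have hC := card_biUnion_toFinset_of_pairwise_not_shareVertex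
    (subset_trans (mod_cast inter_subset_left) hA)
    fun e he f hf ↦ hAB e (mem_inter.1 he).1 f (mem_inter.1 hf).2
  rw [← hC, ← card_union_of_disjoint hDE,
    ← card_union_of_disjoint (disjoint_union_left.2 ⟨hDC, hEC⟩)]
  exact card_le_univ _

end SuperLine

/-- The upper endpoint `v` is injective on `T` and never the lowest point of `W` on its line. -/
theorem card_add_card_image_le_of_forall_step {α β : Type*} [DecidableEq α] [DecidableEq β]
    (p : α → β) (q : α → ℕ) (hpq : Function.Injective fun a ↦ (p a, q a))
    {W : Finset α} {T : Finset (Sym2 α)}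
    (hT : ∀ e ∈ T, ∃ u ∈ W, ∃ v ∈ W, e = s(u, v) ∧ p u = p v ∧ q u + 1 = q v) :
    #T + #(W.image p) ≤ #W := by
  set lowest := W.filter fun v ↦ ∀ w ∈ W, p w = p v → q v ≤ q w
  have himage : #(W.image p) ≤ #lowest := by
    refine (card_le_card ?_).trans (card_image_le (s := lowest) (f := p))
    intro b hb
    obtain ⟨a, ha, rfl⟩ := mem_image.1 hb
    obtain ⟨v, hv, hmin⟩ :=
      (W.filter fun w ↦ p w = p a).exists_min_image q ⟨a, mem_filter.2 ⟨ha, rfl⟩⟩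
    rw [mem_filter] at hv
    exact mem_image.2 ⟨v, mem_filter.2 ⟨hv.1, fun w hw hpw ↦
      hmin w (mem_filter.2 ⟨hw, hpw.trans hv.2⟩)⟩, hv.2⟩
  have hTM : #T ≤ #(W \ lowest) := by
    refine card_le_card_of_forall_subsingleton
      (fun e v ↦ ∃ u, e = s(u, v) ∧ p u = p v ∧ q u + 1 = q v) (fun e he ↦ ?_) ?_
    · obtain ⟨u, hu, v, hv, rfl, hp, hq⟩ := hT e he
      refine ⟨v, mem_sdiff.2 ⟨hv, fun hvLowest ↦ ?_⟩, u, rfl, hp, hq⟩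
      have := (mem_filter.1 hvLowest).2 u hu hp
      omega
    · rintro v - e₁ ⟨-, u₁, rfl, hp₁, hq₁⟩ e₂ ⟨-, u₂, rfl, hp₂, hq₂⟩
      have hu : u₁ = u₂ := hpq (Prod.ext (hp₁.trans hp₂.symm) (by simp only; omega))
      rw [hu]
  have hlowest : lowest ⊆ W := filter_subset _ W
  have := card_sdiff_add_card_eq_card hlowest
  omega

section Grid

variable {n m : ℕ}

theorem gridGraph_adj {u v : Fin n × Fin m} : (gridGraph n m).Adj u v ↔
    (u.1.val + 1 = v.1.val ∨ v.1.val + 1 = u.1.val) ∧ u.2 = v.2 ∨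
      (u.2.val + 1 = v.2.val ∨ v.2.val + 1 = u.2.val) ∧ u.1 = v.1 := by
  rw [gridGraph, boxProd_adj, pathGraph_adj, pathGraph_adj]

instance inst_s19 : DecidableRel (gridGraph n m).Adj :=
  fun _ _ ↦ decidable_of_iff' _ gridGraph_adj

theorem exists_eq_mk_of_mem_edgeSet_gridGraph {e : Sym2 (Fin n × Fin m)}
    (he : e ∈ (gridGraph n m).edgeSet) :
    ∃ u v, e = s(u, v) ∧
      (u.2 = v.2 ∧ u.1.val + 1 = v.1.val ∨ u.1 = v.1 ∧ u.2.val + 1 = v.2.val) := by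
  induction e using Sym2.ind with
  | _ a b =>
    rw [mem_edgeSet, gridGraph_adj] at he
    rcases he with ⟨h | h, hb⟩ | ⟨h | h, ha⟩
    · exact ⟨a, b, rfl, .inl ⟨hb, h⟩⟩
    · exact ⟨b, a, Sym2.eq_swap, .inl ⟨hb.symm, h⟩⟩
    · exact ⟨a, b, rfl, .inr ⟨ha, h⟩⟩
    · exact ⟨b, a, Sym2.eq_swap, .inr ⟨ha.symm, h⟩⟩

theorem gridGraph_card_add_card_image_add_card_image_le
    {S : Finset (Sym2 (Fin n × Fin m))} (hS : ↑S ⊆ (gridGraph n m).edgeSet)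
    {W : Finset (Fin n × Fin m)} (hW : ∀ e ∈ S, ∀ v ∈ e, v ∈ W) :
    #S + #(W.image Prod.fst) + #(W.image Prod.snd) ≤ 2 * #W := by
  classical
  let vertical (e : Sym2 (Fin n × Fin m)) : Prop := ∀ a ∈ e, ∀ b ∈ e, a.2 = b.2
  have hsplit := card_filter_add_card_filter_not (s := S) vertical
  have hvert := card_add_card_image_le_of_forall_step Prod.snd (fun a ↦ a.1.val)
    (fun a b h ↦ Prod.ext (Fin.ext (Prod.ext_iff.1 h).2) (Prod.ext_iff.1 h).1)
    (W := W) (T := S.filter vertical) fun e he ↦ by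
      rw [mem_filter] at he
      obtain ⟨u, v, rfl, h | h⟩ := exists_eq_mk_of_mem_edgeSet_gridGraph (hS he.1)
      · exact ⟨u, hW _ he.1 u (Sym2.mem_mk_left u v), v, hW _ he.1 v (Sym2.mem_mk_right u v),
          rfl, h⟩
      · have := he.2 u (Sym2.mem_mk_left u v) v (Sym2.mem_mk_right u v)
        omega
  have hhor := card_add_card_image_le_of_forall_step Prod.fst (fun a ↦ a.2.val)
    (fun a b h ↦ Prod.ext (Prod.ext_iff.1 h).1 (Fin.ext (Prod.ext_iff.1 h).2))
    (W := W) (T := S.filter fun e ↦ ¬ vertical e) fun e he ↦ by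
      rw [mem_filter] at he
      obtain ⟨u, v, rfl, h | h⟩ := exists_eq_mk_of_mem_edgeSet_gridGraph (hS he.1)
      · refine absurd ?_ he.2
        rintro a ha b hb
        rw [Sym2.mem_iff] at ha hb
        rcases ha with rfl | rfl <;> rcases hb with rfl | rfl <;> simp [h.1]
      · exact ⟨u, hW _ he.1 u (Sym2.mem_mk_left u v), v, hW _ he.1 v (Sym2.mem_mk_right u v),
          rfl, h⟩
  omega

theorem gridGraph_card_le_card_add_eight
    {S : Finset (Sym2 (Fin n × Fin m))} (hS : ↑S ⊆ (gridGraph n m).edgeSet)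
    {W : Finset (Fin n × Fin m)} (hW : ∀ e ∈ S, ∀ v ∈ e, v ∈ W) (hW17 : #W ≤ 17) :
    #S ≤ #W + 8 := by
  classical
  have h := gridGraph_card_add_card_image_add_card_image_le hS hW
  have hrc : #W ≤ #(W.image Prod.fst) * #(W.image Prod.snd) :=
    (card_le_card subset_product).trans (card_product _ _).le
  nlinarith [sq_nonneg ((#(W.image Prod.fst) : ℤ) - #(W.image Prod.snd))]

end Grid

theorem gridGraph_five_seven_superLineComplete : SuperLineComplete (gridGraph 5 7) 26 := by
  rintro A B hA hB hAcard hBcard -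
  by_contra! hAB
  have hsupp (S : Finset (Sym2 (Fin 5 × Fin 7))) :
      ∀ e ∈ S, ∀ v ∈ e, v ∈ S.biUnion Sym2.toFinset :=
    fun e he v hv ↦ mem_biUnion.2 ⟨e, he, Sym2.mem_toFinset.2 hv⟩
  have hcount := card_supports_add_two_mul_card_inter_le hA hAB
  have hD := gridGraph_card_le_card_add_eight
    (subset_trans (mod_cast sdiff_subset) hA) (hsupp (A \ B))
  have hE := gridGraph_card_le_card_add_eight
    (subset_trans (mod_cast sdiff_subset) hB) (hsupp (B \ A))
  have hA' := card_sdiff_add_card_inter A B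
  have hB' := card_sdiff_add_card_inter B A
  rw [inter_comm] at hB'
  simp only [Fintype.card_prod, Fintype.card_fin] at hcount
  omega

set_option maxRecDepth 100000 in
theorem not_superLineComplete_gridGraph_five_seven {r : ℕ} (hr : 0 < r) (hr25 : r ≤ 25) :
    ¬ SuperLineComplete (gridGraph 5 7) r := by
  -- two blocks of 17 vertices, separated by the vertex `(2, 3)`
  refine not_superLineComplete_of_forall_not_shareVertex_s19
    (P := (gridGraph 5 7).edgeFinset.filter fun e ↦ ∀ v ∈ e, v.2 < 3 ∨ v.2 = 3 ∧ v.1 < 2)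
    (Q := (gridGraph 5 7).edgeFinset.filter fun e ↦ ∀ v ∈ e, 3 < v.2 ∨ v.2 = 3 ∧ 2 < v.1)
    ?_ ?_ ?_ hr (hr25.trans (by decide)) (hr25.trans (by decide))
  · exact fun e he ↦ mem_edgeFinset.1 (mem_filter.1 he).1
  · exact fun e he ↦ mem_edgeFinset.1 (mem_filter.1 he).1
  · rintro e he f hf ⟨v, hve, hvf⟩
    have := (mem_filter.1 he).2 v hve
    have := (mem_filter.1 hf).2 v hvf
    omega

theorem lc_grid_five_seven : lcIs (gridGraph 5 7) 26 := by
  refine ⟨⟨by norm_num, gridGraph_five_seven_superLineComplete⟩, fun r ⟨hr, hG⟩ ↦ ?_⟩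
  by_contra! h
  exact not_superLineComplete_gridGraph_five_seven hr (by omega) hG
end
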